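/- arXiv:2308.13010 — 6 statements merged into one kernel-verified Lean document; each statement's English description precedes it below -/
import Mathlib

section
/- In a median graph, the projection map onto the convex hull of a nonempty set A is the unique median homomorphism from the graph onto cvx(A) that fixes cvx(A) pointwise. -/
open SimpleGraph

variable {X : Type*}

/-- The geodesic interval between `x` and `y`. -/
def interval (G : SimpleGraph X) (x y : X) : Set X :=
  {z | G.dist x z + G.dist z y = G.dist x y}

/-- A set is convex if it contains all geodesics between its points. -/
def IsConvexSet (G : SimpleGraph X) (A : Set X) : Prop :=
  ∀ x ∈ A, ∀ y ∈ A, interval G x y ⊆ A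

/-- A median graph: connected, and every triple has a unique median. -/
def IsMedianGraph (G : SimpleGraph X) : Prop :=
  G.Connected ∧ ∀ x y z : X, ∃! m : X,
    m ∈ interval G x y ∧ m ∈ interval G y z ∧ m ∈ interval G z x

/-- The cone at `y` away from `x`. -/
def cone (G : SimpleGraph X) (x y : X) : Set X :=
  {z | y ∈ interval G x z}

/-- A half-space: a convex set with convex complement. -/
def IsHalfspace (G : SimpleGraph X) (H : Set X) : Prop :=
  IsConvexSet G H ∧ IsConvexSet G Hᶜ

/-- Convex hull. -/
def convexHullG (G : SimpleGraph X) (A : Set X) : Set X :=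
  ⋂₀ {B : Set X | IsConvexSet G B ∧ A ⊆ B}

/-- Inward edge boundary of a set. -/
def edgeBoundaryIn (G : SimpleGraph X) (H : Set X) : Set (X × X) :=
  {e | G.Adj e.1 e.2 ∧ e.1 ∉ H ∧ e.2 ∈ H}

/-- Two sets are nested if one of the four corners is empty. -/
def Nested (A B : Set X) : Prop :=
  A ∩ B = ∅ ∨ A ∩ Bᶜ = ∅ ∨ Aᶜ ∩ B = ∅ ∨ Aᶜ ∩ Bᶜ = ∅

open Classical in
noncomputable def medianOf (G : SimpleGraph X) (x y z : X) : X :=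
  if h : ∃! m : X, m ∈ interval G x y ∧ m ∈ interval G y z ∧ m ∈ interval G z x
  then h.choose else x

open Classical in
noncomputable def projOn (G : SimpleGraph X) (A : Set X) (x : X) : X :=
  if h : ∃ p, p ∈ A ∧ ∀ a ∈ A, p ∈ interval G x a then h.choose else x


/-- Edges crossing out of a set. -/
def crossEdges (G : SimpleGraph X) (A : Set X) : Set (X × X) :=
  {e | G.Adj e.1 e.2 ∧ e.1 ∈ A ∧ e.2 ∉ A}

/-- Total vertex boundary of a set. -/
def vBoundary (G : SimpleGraph X) (A : Set X) : Set X :=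
  {x | ∃ y, G.Adj x y ∧ ((x ∈ A ∧ y ∉ A) ∨ (x ∉ A ∧ y ∈ A))}

/-- Two sets are non-nested if all four corners are nonempty. -/
def NonNested (A B : Set X) : Prop :=
  (A ∩ B).Nonempty ∧ (A ∩ Bᶜ).Nonempty ∧ (Aᶜ ∩ B).Nonempty ∧ (Aᶜ ∩ Bᶜ).Nonempty

/-- `H` is a successor of `K`: both are half-spaces, `K ⊊ H`, with no half-space
strictly in between. -/
def Successor (G : SimpleGraph X) (H K : Set X) : Prop :=
  IsHalfspace G H ∧ IsHalfspace G K ∧ K ⊂ H ∧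
    ¬ ∃ L : Set X, IsHalfspace G L ∧ K ⊂ L ∧ L ⊂ H

/-- Adjacency of the hyperplanes of half-spaces `H`, `K`. -/
def HypAdj (G : SimpleGraph X) (H K : Set X) : Prop :=
  H = K ∨ H = Kᶜ ∨ NonNested H K ∨
  Successor G H K ∨ Successor G K H ∨
  Successor G Hᶜ K ∨ Successor G K Hᶜ ∨
  Successor G H Kᶜ ∨ Successor G Kᶜ H ∨
  Successor G Hᶜ Kᶜ ∨ Successor G Kᶜ Hᶜ

/-- The Hamming cube on `{0,1}^n`: strings adjacent iff they differ in exactly one bit. -/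
def hammingCube (n : ℕ) : SimpleGraph (Fin n → Bool) :=
  SimpleGraph.fromRel (fun a b => ∃! i : Fin n, a i ≠ b i)

/-- Oriented edges `e`, `f` are parallel sides of a square (4-cycle). -/
def SquareParallel (G : SimpleGraph X) (e f : X × X) : Prop :=
  G.Adj e.1 e.2 ∧ G.Adj f.1 f.2 ∧ G.Adj e.1 f.1 ∧ G.Adj e.2 f.2 ∧ e.1 ≠ f.2 ∧ e.2 ≠ f.1

section Aux

variable {G : SimpleGraph X}

lemma medianOf_spec (hG : IsMedianGraph G) (x y z : X) :
    medianOf G x y z ∈ interval G x y ∧ medianOf G x y z ∈ interval G y z ∧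
      medianOf G x y z ∈ interval G z x := by
  unfold medianOf
  rw [dif_pos (hG.2 x y z)]
  exact (hG.2 x y z).choose_spec.1

lemma medianOf_eq (hG : IsMedianGraph G) {x y z m : X} (h1 : m ∈ interval G x y)
    (h2 : m ∈ interval G y z) (h3 : m ∈ interval G z x) : m = medianOf G x y z := by
  have hs := medianOf_spec hG x y z
  exact (hG.2 x y z).unique ⟨h1, h2, h3⟩ ⟨hs.1, hs.2.1, hs.2.2⟩

lemma adj_dist_cases (hG : IsMedianGraph G) {a b : X} (hab : G.Adj a b) (u : X) :
    G.dist u b = G.dist u a + 1 ∨ G.dist u a = G.dist u b + 1 := by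
  have h1 : G.dist a b = 1 := dist_eq_one_iff_adj.mpr hab
  have hba : G.dist b a = 1 := by rw [SimpleGraph.dist_comm]; exact h1
  have t1 : G.dist u b ≤ G.dist u a + G.dist a b := hG.1.dist_triangle
  have t2 : G.dist u a ≤ G.dist u b + G.dist b a := hG.1.dist_triangle
  have hne : G.dist u a ≠ G.dist u b := by
    intro he
    have spec := medianOf_spec hG u a b
    set μ := medianOf G u a b with hμ
    have m1 : G.dist u μ + G.dist μ a = G.dist u a := spec.1
    have m2 : G.dist a μ + G.dist μ b = G.dist a b := spec.2.1
    have m3 : G.dist b μ + G.dist μ u = G.dist b u := spec.2.2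
    have cam : G.dist a μ = G.dist μ a := SimpleGraph.dist_comm
    have cbu : G.dist b u = G.dist u b := SimpleGraph.dist_comm
    have cbm : G.dist b μ = G.dist μ b := SimpleGraph.dist_comm
    have cmu : G.dist μ u = G.dist u μ := SimpleGraph.dist_comm
    have cau : G.dist a u = G.dist u a := SimpleGraph.dist_comm
    rcases Nat.eq_zero_or_pos (G.dist a μ) with h0 | hp
    · have he1 : a = μ := (hG.1.dist_eq_zero_iff).mp h0
      have m3' : G.dist b a + G.dist a u = G.dist b u := by rw [he1]; exact m3
      have cba : G.dist b a = 1 := hba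
      omega
    · have hb0 : G.dist μ b = 0 := by omega
      have he2 : μ = b := (hG.1.dist_eq_zero_iff).mp hb0
      have m1' : G.dist u b + G.dist b a = G.dist u a := by rw [he2] at m1; exact m1
      omega
  omega

lemma exists_step (h : G.Connected) {x y : X} {k : ℕ} (hd : G.dist x y = k + 1) :
    ∃ x₁, G.Adj x x₁ ∧ G.dist x₁ y = k := by
  obtain ⟨p, hp⟩ := (h x y).exists_walk_length_eq_dist
  cases p with
  | nil => rw [hd] at hp; simp at hp
  | @cons _ x₁ _ ha q =>
    refine ⟨x₁, ha, ?_⟩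
    have h1 : G.dist x₁ y ≤ q.length := dist_le q
    have h2 : G.dist x y ≤ G.dist x x₁ + G.dist x₁ y := h.dist_triangle
    have h3 : G.dist x x₁ = 1 := dist_eq_one_iff_adj.mpr ha
    simp only [Walk.length_cons] at hp
    omega


lemma square_bad (hG : IsMedianGraph G) {x w w₁ x₁ u : X}
    (e1 : G.Adj x w) (e2 : G.Adj w w₁) (e3 : G.Adj w₁ x₁) (e4 : G.Adj x₁ x)
    (hxw₁ : x ≠ w₁) (hwx₁ : w ≠ x₁)
    (h1 : G.dist u w = G.dist u x + 1) (h2 : G.dist u x₁ = G.dist u x + 1)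
    (h3 : G.dist u w₁ = G.dist u x) : False := by
  have dxw : G.dist x w = 1 := dist_eq_one_iff_adj.mpr e1
  have dx₁x : G.dist x₁ x = 1 := dist_eq_one_iff_adj.mpr e4
  have dww₁ : G.dist w w₁ = 1 := dist_eq_one_iff_adj.mpr e2
  have dw₁x₁ : G.dist w₁ x₁ = 1 := dist_eq_one_iff_adj.mpr e3
  have cxx₁ : G.dist x x₁ = 1 := by rw [SimpleGraph.dist_comm]; exact dx₁x
  have hwx₁2 : G.dist w x₁ = 2 := by
    have hle : G.dist w x₁ ≤ G.dist w x + G.dist x x₁ := hG.1.dist_triangle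
    have cwx : G.dist w x = 1 := by rw [SimpleGraph.dist_comm]; exact dxw
    have hne0 : G.dist w x₁ ≠ 0 := fun h => hwx₁ ((hG.1.dist_eq_zero_iff).mp h)
    have hne1 : G.dist w x₁ ≠ 1 := by
      intro h
      rcases adj_dist_cases hG (dist_eq_one_iff_adj.mp h) x with hc | hc <;> omega
    omega
  -- both x and w₁ are medians of (u, w, x₁): contradiction with uniqueness
  have cw₁w : G.dist w₁ w = 1 := by rw [SimpleGraph.dist_comm]; exact dww₁
  have cx₁w₁ : G.dist x₁ w₁ = 1 := by rw [SimpleGraph.dist_comm]; exact dw₁x₁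
  have cx₁u : G.dist x₁ u = G.dist u x₁ := SimpleGraph.dist_comm
  have cw₁u : G.dist w₁ u = G.dist u w₁ := SimpleGraph.dist_comm
  have hx : x = medianOf G u w x₁ :=
    medianOf_eq hG (show G.dist u x + G.dist x w = G.dist u w by omega)
      (show G.dist w x + G.dist x x₁ = G.dist w x₁ by rw [SimpleGraph.dist_comm (u := w) (v := x)]; omega)
      (show G.dist x₁ x + G.dist x u = G.dist x₁ u by rw [SimpleGraph.dist_comm (u := x) (v := u)]; omega)
  have hw₁ : w₁ = medianOf G u w x₁ :=
    medianOf_eq hG (show G.dist u w₁ + G.dist w₁ w = G.dist u w by omega)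
      (show G.dist w w₁ + G.dist w₁ x₁ = G.dist w x₁ by omega)
      (show G.dist x₁ w₁ + G.dist w₁ u = G.dist x₁ u by omega)
  exact hxw₁ (hx.trans hw₁.symm)

lemma square_consistency (hG : IsMedianGraph G) {x w w₁ x₁ : X}
    (e1 : G.Adj x w) (e2 : G.Adj w w₁) (e3 : G.Adj w₁ x₁) (e4 : G.Adj x₁ x)
    (hxw₁ : x ≠ w₁) (hwx₁ : w ≠ x₁) (u : X) :
    G.dist u w + G.dist u x₁ = G.dist u x + G.dist u w₁ := by
  have t1 := adj_dist_cases hG e1 u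
  have t2 := adj_dist_cases hG e2 u
  have t3 := adj_dist_cases hG e3 u
  have t4 := adj_dist_cases hG e4 u
  rcases t1 with h1 | h1 <;> rcases t2 with h2 | h2 <;> rcases t3 with h3 | h3 <;>
    rcases t4 with h4 | h4 <;>
    first
      | omega
      | exact (square_bad (u := u) hG e1 e2 e3 e4 hxw₁ hwx₁ (by omega) (by omega) (by omega)).elim
      | exact (square_bad (u := u) hG e1.symm e4.symm e3.symm e2.symm hwx₁ hxw₁ (by omega) (by omega) (by omega)).elim

lemma ladder (hG : IsMedianGraph G) :
    ∀ k : ℕ, ∀ x w px pw u : X, G.Adj x w → G.Adj px pw →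
      G.dist x px = k → G.dist w pw = k → G.dist x pw = k + 1 → G.dist w px = k + 1 →
      G.dist u w < G.dist u x → G.dist u pw < G.dist u px := by
  intro k
  induction k with
  | zero =>
    intro x w px pw u _ _ h1 h2 _ _ h7
    have hx : x = px := (hG.1.dist_eq_zero_iff).mp h1
    have hw : w = pw := (hG.1.dist_eq_zero_iff).mp h2
    rw [← hx, ← hw]; exact h7
  | succ n ih =>
    intro x w px pw u exw epxpw h1 h2 h3 h4 h7
    obtain ⟨x₁, ex1, hx1⟩ := exists_step hG.1 h1
    have dpxpw : G.dist px pw = 1 := dist_eq_one_iff_adj.mpr epxpw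
    have dxw : G.dist x w = 1 := dist_eq_one_iff_adj.mpr exw
    have dxx₁ : G.dist x x₁ = 1 := dist_eq_one_iff_adj.mpr ex1
    have hwx₁ : G.dist w x₁ = 2 := by
      have hle : G.dist w x₁ ≤ G.dist w x + G.dist x x₁ := hG.1.dist_triangle
      have hge : G.dist w px ≤ G.dist w x₁ + G.dist x₁ px := hG.1.dist_triangle
      have cwx : G.dist w x = 1 := by rw [SimpleGraph.dist_comm]; exact dxw
      omega
    have hx₁pw : G.dist x₁ pw = n + 1 := by
      have u1 : G.dist x₁ pw ≤ G.dist x₁ px + G.dist px pw := hG.1.dist_triangle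
      have u2 : G.dist x pw ≤ G.dist x x₁ + G.dist x₁ pw := hG.1.dist_triangle
      omega
    set w₁ := medianOf G w x₁ pw with hw₁def
    have spec := medianOf_spec hG w x₁ pw
    have s1 : G.dist w w₁ + G.dist w₁ x₁ = G.dist w x₁ := spec.1
    have s2 : G.dist x₁ w₁ + G.dist w₁ pw = G.dist x₁ pw := spec.2.1
    have s3 : G.dist pw w₁ + G.dist w₁ w = G.dist pw w := spec.2.2
    have c1 : G.dist x₁ w₁ = G.dist w₁ x₁ := SimpleGraph.dist_comm
    have c2 : G.dist pw w₁ = G.dist w₁ pw := SimpleGraph.dist_comm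
    have c3 : G.dist pw w = G.dist w pw := SimpleGraph.dist_comm
    have c4 : G.dist w₁ w = G.dist w w₁ := SimpleGraph.dist_comm
    have dww₁ : G.dist w w₁ = 1 := by omega
    have dw₁x₁ : G.dist w₁ x₁ = 1 := by omega
    have dw₁pw : G.dist w₁ pw = n := by omega
    have eww₁ : G.Adj w w₁ := dist_eq_one_iff_adj.mp dww₁
    have ew₁x₁ : G.Adj w₁ x₁ := dist_eq_one_iff_adj.mp dw₁x₁
    have hne1 : x ≠ w₁ := by
      intro h
      rw [h] at h3
      omega
    have hne2 : w ≠ x₁ := by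
      intro h
      rw [h] at hwx₁
      simp [SimpleGraph.dist_self] at hwx₁
    have hsq := square_consistency hG exw eww₁ ew₁x₁ ex1.symm hne1 hne2 u
    have h7' : G.dist u w₁ < G.dist u x₁ := by omega
    have dw₁px : G.dist w₁ px = n + 1 := by
      have u1 : G.dist w px ≤ G.dist w w₁ + G.dist w₁ px := hG.1.dist_triangle
      have u2 : G.dist w₁ px ≤ G.dist w₁ pw + G.dist pw px := hG.1.dist_triangle
      have c4 : G.dist pw px = 1 := by rw [SimpleGraph.dist_comm]; exact dpxpw
      omega
    exact ih x₁ w₁ px pw u ew₁x₁.symm epxpw hx1 dw₁pw hx₁pw dw₁px h7'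

lemma exists_gate (hG : IsMedianGraph G) {C : Set X} (hC : IsConvexSet G C)
    (hne : C.Nonempty) (x : X) : ∃ p, p ∈ C ∧ ∀ c ∈ C, p ∈ interval G x c := by
  obtain ⟨c₀, hc₀⟩ := hne
  have hS : {n | ∃ c ∈ C, G.dist x c = n}.Nonempty := ⟨G.dist x c₀, c₀, hc₀, rfl⟩
  obtain ⟨p, hpC, hpd⟩ := Nat.sInf_mem hS
  have hmin : ∀ c ∈ C, sInf {n | ∃ c ∈ C, G.dist x c = n} ≤ G.dist x c :=
    fun c hc => Nat.sInf_le ⟨c, hc, rfl⟩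
  refine ⟨p, hpC, fun c hc => ?_⟩
  have spec := medianOf_spec hG x p c
  set m := medianOf G x p c with hm
  have hmC : m ∈ C := hC p hpC c hc spec.2.1
  have e1 : G.dist x m + G.dist m p = G.dist x p := spec.1
  have e3 : G.dist c m + G.dist m x = G.dist c x := spec.2.2
  have hge := hmin m hmC
  have cmx : G.dist m x = G.dist x m := SimpleGraph.dist_comm
  have hmp : G.dist m p = 0 := by omega
  have hmp' : m = p := (hG.1.dist_eq_zero_iff).mp hmp
  show G.dist x p + G.dist p c = G.dist x c
  have e3' : G.dist c p + G.dist p x = G.dist c x := by rw [← hmp']; exact e3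
  have ccx : G.dist c x = G.dist x c := SimpleGraph.dist_comm
  have ccp : G.dist c p = G.dist p c := SimpleGraph.dist_comm
  have cpx : G.dist p x = G.dist x p := SimpleGraph.dist_comm
  omega

end Aux

theorem projection_unique_medianHom (G : SimpleGraph X) (hG : IsMedianGraph G)
    (A : Set X) (hA : A.Nonempty) :
    (∃! g : X → X,
      (∀ x : X, g x ∈ convexHullG G A) ∧
      (∀ a ∈ convexHullG G A, g a = a) ∧
      (∀ x y z : X, g (medianOf G x y z) = medianOf G (g x) (g y) (g z))) ∧
    (∀ g : X → X,
      (∀ x : X, g x ∈ convexHullG G A) →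
      (∀ a ∈ convexHullG G A, g a = a) →
      (∀ x y z : X, g (medianOf G x y z) = medianOf G (g x) (g y) (g z)) →
      ∀ x : X, ∀ a ∈ A, g x ∈ interval G x a) := by
  set C := convexHullG G A with hCdef
  have hCc : IsConvexSet G C := by
    intro p hp q hq z hz
    intro B hB
    exact hB.1 p (hp B hB) q (hq B hB) hz
  have hAC : A ⊆ C := fun a ha B hB => hB.2 ha
  have hCne : C.Nonempty := ⟨hA.choose, hAC hA.choose_spec⟩
  choose g hg1 hg2 using fun x => exists_gate hG hCc hCne x
  -- the gate map fixes C
  have hfix : ∀ a ∈ C, g a = a := by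
    intro a ha
    have h : G.dist a (g a) + G.dist (g a) a = G.dist a a := hg2 a a ha
    have hself : G.dist a a = 0 := SimpleGraph.dist_self
    have : G.dist a (g a) = 0 := by omega
    exact ((hG.1.dist_eq_zero_iff).mp this).symm
  -- gate equations as distances
  have hgd : ∀ x : X, ∀ c ∈ C, G.dist x (g x) + G.dist (g x) c = G.dist x c :=
    fun x c hc => hg2 x c hc
  -- adjacent case of geodesic preservation
  have adjK : ∀ x w y : X, G.Adj x w → w ∈ interval G x y →
      g w ∈ interval G (g x) (g y) := by
    intro x w y hadj hw
    have hw' : G.dist x w + G.dist w y = G.dist x y := hw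
    have dxw : G.dist x w = 1 := SimpleGraph.dist_eq_one_iff_adj.mpr hadj
    have e1 : G.dist x (g x) + G.dist (g x) (g w) = G.dist x (g w) := hgd x (g w) (hg1 w)
    have e2 : G.dist w (g w) + G.dist (g w) (g x) = G.dist w (g x) := hgd w (g x) (hg1 x)
    have t1 : G.dist x (g w) ≤ G.dist x w + G.dist w (g w) := hG.1.dist_triangle
    have t2 : G.dist w (g x) ≤ G.dist w x + G.dist x (g x) := hG.1.dist_triangle
    have cwx : G.dist w x = G.dist x w := SimpleGraph.dist_comm
    have cgwx : G.dist (g w) (g x) = G.dist (g x) (g w) := SimpleGraph.dist_comm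
    by_cases hD : G.dist (g x) (g w) = 0
    · have heq : g x = g w := (hG.1.dist_eq_zero_iff).mp hD
      show G.dist (g x) (g w) + G.dist (g w) (g y) = G.dist (g x) (g y)
      rw [← heq]
      simp [SimpleGraph.dist_self]
    · have hD1 : G.dist (g x) (g w) = 1 := by omega
      have hadjg : G.Adj (g x) (g w) := SimpleGraph.dist_eq_one_iff_adj.mp hD1
      have hyw : G.dist y w < G.dist y x := by
        have c1 : G.dist y w = G.dist w y := SimpleGraph.dist_comm
        have c2 : G.dist y x = G.dist x y := SimpleGraph.dist_comm
        omega
      have hlad := ladder hG (G.dist x (g x)) x w (g x) (g w) y hadj hadjg rfl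
        (by omega) (by omega) (by omega) hyw
      have e3 : G.dist y (g y) + G.dist (g y) (g w) = G.dist y (g w) := hgd y (g w) (hg1 w)
      have e4 : G.dist y (g y) + G.dist (g y) (g x) = G.dist y (g x) := hgd y (g x) (hg1 x)
      have tri := adj_dist_cases hG hadjg (g y)
      show G.dist (g x) (g w) + G.dist (g w) (g y) = G.dist (g x) (g y)
      have c3 : G.dist (g w) (g y) = G.dist (g y) (g w) := SimpleGraph.dist_comm
      have c4 : G.dist (g x) (g y) = G.dist (g y) (g x) := SimpleGraph.dist_comm
      omega
  -- general geodesic preservation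
  have K : ∀ n : ℕ, ∀ x w y : X, G.dist x w = n → w ∈ interval G x y →
      g w ∈ interval G (g x) (g y) := by
    intro n
    induction n with
    | zero =>
      intro x w y hd hw
      have heq : x = w := (hG.1.dist_eq_zero_iff).mp hd
      rw [← heq]
      show G.dist (g x) (g x) + G.dist (g x) (g y) = G.dist (g x) (g y)
      simp [SimpleGraph.dist_self]
    | succ n ih =>
      intro x w y hd hw
      obtain ⟨x₁, hx₁adj, hx₁d⟩ := exists_step hG.1 hd
      have dxx₁ : G.dist x x₁ = 1 := SimpleGraph.dist_eq_one_iff_adj.mpr hx₁adj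
      have hw' : G.dist x w + G.dist w y = G.dist x y := hw
      have tri1 : G.dist x₁ y ≤ G.dist x₁ w + G.dist w y := hG.1.dist_triangle
      have tri2 : G.dist x y ≤ G.dist x x₁ + G.dist x₁ y := hG.1.dist_triangle
      have tri3 : G.dist x₁ y + G.dist x x₁ ≥ G.dist x y := by
        have := hG.1.dist_triangle (u := x) (v := x₁) (w := y)
        omega
      have hwI : w ∈ interval G x₁ y := by
        show G.dist x₁ w + G.dist w y = G.dist x₁ y
        omega
      have hx₁Ixw : x₁ ∈ interval G x w := by
        show G.dist x x₁ + G.dist x₁ w = G.dist x w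
        omega
      have hx₁Ixy : x₁ ∈ interval G x y := by
        show G.dist x x₁ + G.dist x₁ y = G.dist x y
        omega
      have i3 : G.dist (g x₁) (g w) + G.dist (g w) (g y) = G.dist (g x₁) (g y) :=
        ih x₁ w y hx₁d hwI
      have i1 : G.dist (g x) (g x₁) + G.dist (g x₁) (g w) = G.dist (g x) (g w) :=
        adjK x x₁ w hx₁adj hx₁Ixw
      have i2 : G.dist (g x) (g x₁) + G.dist (g x₁) (g y) = G.dist (g x) (g y) :=
        adjK x x₁ y hx₁adj hx₁Ixy
      show G.dist (g x) (g w) + G.dist (g w) (g y) = G.dist (g x) (g y)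
      omega
  -- the gate map is a median homomorphism
  have hhom : ∀ x y z : X, g (medianOf G x y z) = medianOf G (g x) (g y) (g z) := by
    intro x y z
    have spec := medianOf_spec hG x y z
    have k1 := K (G.dist x (medianOf G x y z)) x (medianOf G x y z) y rfl spec.1
    have k2 := K (G.dist y (medianOf G x y z)) y (medianOf G x y z) z rfl spec.2.1
    have k3 := K (G.dist z (medianOf G x y z)) z (medianOf G x y z) x rfl spec.2.2
    exact medianOf_eq hG k1 k2 k3
  -- any median-hom retraction onto C is the gate map
  have part2 : ∀ gg : X → X,
      (∀ x : X, gg x ∈ C) → (∀ a ∈ C, gg a = a) →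
      (∀ x y z : X, gg (medianOf G x y z) = medianOf G (gg x) (gg y) (gg z)) →
      ∀ x : X, ∀ c ∈ C, gg x ∈ interval G x c := by
    intro gg p1 p2 p3 x c hc
    have spec := medianOf_spec hG x (gg x) c
    set m := medianOf G x (gg x) c with hm
    have hmC : m ∈ C := hCc (gg x) (p1 x) c hc spec.2.1
    have h1 : gg m = m := p2 m hmC
    have h2 : gg m = medianOf G (gg x) (gg (gg x)) (gg c) := p3 x (gg x) c
    rw [p2 (gg x) (p1 x), p2 c hc] at h2
    have h3 : gg x = medianOf G (gg x) (gg x) c := by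
      refine medianOf_eq hG ?_ ?_ ?_
      · show G.dist (gg x) (gg x) + G.dist (gg x) (gg x) = G.dist (gg x) (gg x)
        simp [SimpleGraph.dist_self]
      · show G.dist (gg x) (gg x) + G.dist (gg x) c = G.dist (gg x) c
        simp [SimpleGraph.dist_self]
      · show G.dist c (gg x) + G.dist (gg x) (gg x) = G.dist c (gg x)
        simp [SimpleGraph.dist_self]
    have hmx : m = gg x := by rw [← h1, h2, ← h3]
    have h4 : G.dist c m + G.dist m x = G.dist c x := spec.2.2
    rw [hmx] at h4
    show G.dist x (gg x) + G.dist (gg x) c = G.dist x c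
    have c1 : G.dist c (gg x) = G.dist (gg x) c := SimpleGraph.dist_comm
    have c2 : G.dist (gg x) x = G.dist x (gg x) := SimpleGraph.dist_comm
    have c3 : G.dist c x = G.dist x c := SimpleGraph.dist_comm
    omega
  refine ⟨⟨g, ⟨fun x => hg1 x, hfix, hhom⟩, ?_⟩, ?_⟩
  · rintro g' ⟨p1, p2, p3⟩
    funext x
    have h1 : G.dist x (g' x) + G.dist (g' x) (g x) = G.dist x (g x) :=
      part2 g' p1 p2 p3 x (g x) (hg1 x)
    have h2 : G.dist x (g x) + G.dist (g x) (g' x) = G.dist x (g' x) :=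
      hg2 x (g' x) (p1 x)
    have c : G.dist (g' x) (g x) = G.dist (g x) (g' x) := SimpleGraph.dist_comm
    have : G.dist (g' x) (g x) = 0 := by omega
    exact (hG.1.dist_eq_zero_iff).mp this
  · intro g' p1 p2 p3 x a ha
    exact part2 g' p1 p2 p3 x a (hAC ha)
end

section
/- In a median graph, for any two nonempty convex sets A and B, the composition proj_A ∘ proj_B ∘ proj_A equals proj_A ∘ proj_B, which equals the projection onto proj_A(B); consequently proj_A ∘ proj_B and proj_B ∘ proj_A restrict to inverse graph isomorphisms between proj_A(B) and proj_B(A). Moreover if A ∩ B ≠ ∅ then proj_A ∘ proj_B = proj_B ∘ proj_A = proj_{A∩B}. -/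
open SimpleGraph

variable {X : Type*}

section MGP

variable {X : Type*} {G : SimpleGraph X}

lemma dcomm (G : SimpleGraph X) (u v : X) : G.dist u v = G.dist v u :=
  SimpleGraph.dist_comm

lemma mem_int {x y z : X} : z ∈ interval G x y ↔ G.dist x z + G.dist z y = G.dist x y :=
  Iff.rfl

lemma int_symm {x y z : X} (h : z ∈ interval G x y) : z ∈ interval G y x := by
  rw [mem_int] at h ⊢
  rw [dcomm G y z, dcomm G z x, dcomm G y x]
  omega

lemma left_mem_int {x y : X} : x ∈ interval G x y := by
  rw [mem_int, SimpleGraph.dist_self]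
  omega

lemma int_comp (hc : G.Connected) {x y m w : X} (hm : m ∈ interval G x y)
    (hw : w ∈ interval G x m) : w ∈ interval G x y ∧ m ∈ interval G w y := by
  rw [mem_int] at hm hw ⊢
  rw [mem_int]
  have t1 := hc.dist_triangle (u := w) (v := m) (w := y)
  have t2 := hc.dist_triangle (u := x) (v := w) (w := y)
  constructor <;> omega

lemma median3 (hG : IsMedianGraph G) (x y z : X) :
    ∃ m, m ∈ interval G x y ∧ m ∈ interval G y z ∧ m ∈ interval G z x :=
  (hG.2 x y z).exists

lemma adj_dist_one {u v : X} (h : G.Adj u v) : G.dist u v = 1 :=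
  (SimpleGraph.dist_eq_one_iff_adj (G := G)).2 h

lemma dist_one_adj {u v : X} (h : G.dist u v = 1) : G.Adj u v :=
  (SimpleGraph.dist_eq_one_iff_adj (G := G)).1 h

lemma dist_zero_eq (hc : G.Connected) {u v : X} (h : G.dist u v = 0) : u = v :=
  (hc.dist_eq_zero_iff).1 h

lemma no_tie (hG : IsMedianGraph G) {a b : X} (hab : G.Adj a b) (z : X) :
    G.dist z a ≠ G.dist z b := by
  intro h
  obtain ⟨m, h1, h2, h3⟩ := median3 hG z a b
  rw [mem_int] at h1 h2 h3
  have hab1 : G.dist a b = 1 := adj_dist_one hab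
  have c1 : G.dist a m = G.dist m a := dcomm G a m
  have c2 : G.dist b m = G.dist m b := dcomm G b m
  have c3 : G.dist m z = G.dist z m := dcomm G m z
  have c4 : G.dist b z = G.dist z b := dcomm G b z
  omega

lemma exists_toward (hc : G.Connected) {x y : X} {n : ℕ} (h : G.dist x y = n + 1) :
    ∃ z, G.Adj x z ∧ G.dist x z = 1 ∧ G.dist z y = n := by
  obtain ⟨p, hp⟩ := hc.exists_walk_length_eq_dist x y
  cases p with
  | nil =>
    rw [SimpleGraph.dist_self] at h
    omega
  | cons hadj q =>
    rename_i w
    refine ⟨w, hadj, adj_dist_one hadj, ?_⟩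
    have hq : G.dist w y ≤ q.length := SimpleGraph.dist_le q
    have hlen : q.length + 1 = n + 1 := by
      rw [← h, ← hp, SimpleGraph.Walk.length_cons]
    have t := hc.dist_triangle (u := x) (v := w) (w := y)
    have hxw : G.dist x w = 1 := adj_dist_one hadj
    omega

end MGP
section MGP2

variable {X : Type*} {G : SimpleGraph X}

lemma hs_step (hG : IsMedianGraph G) :
    ∀ ℓ : ℕ, ∀ a b z v z' : X, G.Adj a b →
      G.dist z b < G.dist z a → G.dist z' b < G.dist z' a →
      ¬ (G.dist v b < G.dist v a) → G.Adj z v → v ∈ interval G z z' →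
      G.dist v z' = ℓ → False := by
  have hc := hG.1
  intro ℓ
  induction ℓ using Nat.strong_induction_on with
  | _ ℓ IH =>
  intro a b z v z' hab hz hz' hv hzv hvI hvl
  have hab1 : G.dist a b = 1 := adj_dist_one hab
  have cab : G.dist b a = G.dist a b := dcomm G b a
  -- z levels
  have tz : G.dist z a ≤ G.dist z b + G.dist b a := hc.dist_triangle
  have hza : G.dist z a = G.dist z b + 1 := by omega
  -- v levels
  have tievb := no_tie hG hab v
  have tv : G.dist v b ≤ G.dist v a + G.dist a b := hc.dist_triangle
  have hvb : G.dist v b = G.dist v a + 1 := by omega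
  have hzv1 : G.dist z v = 1 := adj_dist_one hzv
  have czv : G.dist v z = G.dist z v := dcomm G v z
  have t1 : G.dist v a ≤ G.dist v z + G.dist z a := hc.dist_triangle
  have t2 : G.dist z a ≤ G.dist z v + G.dist v a := hc.dist_triangle
  have t3 : G.dist v b ≤ G.dist v z + G.dist z b := hc.dist_triangle
  have t4 : G.dist z b ≤ G.dist z v + G.dist v b := hc.dist_triangle
  have hva : G.dist v a = G.dist z b := by omega
  -- v ≠ z'
  have hvz' : v ≠ z' := by
    intro hh
    rw [hh] at hvb hva
    omega
  have hl1 : 1 ≤ ℓ := by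
    rcases Nat.eq_zero_or_pos ℓ with h0 | h1
    · exact absurd (dist_zero_eq hc (h0 ▸ hvl)) hvz'
    · exact h1
  -- the median of v z' b
  obtain ⟨m', hm1, hm2, hm3⟩ := median3 hG v z' b
  by_cases hmv : m' = v
  · subst hmv
    rw [mem_int] at hm2
    have t5 : G.dist z' a ≤ G.dist z' m' + G.dist m' a := hc.dist_triangle
    omega
  -- choose v2 one step from v towards m'
  have hdvm : G.dist v m' ≠ 0 := fun hh => hmv (dist_zero_eq hc hh).symm
  obtain ⟨n, hn⟩ : ∃ n, G.dist v m' = n + 1 := ⟨G.dist v m' - 1, by omega⟩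
  obtain ⟨v2, hv2adj, hv2d, hv2m⟩ := exists_toward hc hn
  have hv2I : v2 ∈ interval G v m' := by rw [mem_int]; omega
  obtain ⟨hv2z', hm'2⟩ := int_comp hc hm1 hv2I
  obtain ⟨hv2b, -⟩ := int_comp hc (int_symm hm3) hv2I
  rw [mem_int] at hv2z' hv2b hvI
  have hv2bk : G.dist v2 b = G.dist z b := by omega
  have hv2z'l : G.dist v2 z' + 1 = ℓ := by omega
  -- level of v2 relative to a
  have tiev2 := no_tie hG hab v2
  have s1 : G.dist v2 a ≤ G.dist v2 b + 1 := by
    have := hc.dist_triangle (u := v2) (v := b) (w := a); omega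
  have s2 : G.dist v2 a ≤ G.dist v2 v + G.dist v a := hc.dist_triangle
  have s3 : G.dist v a ≤ G.dist v v2 + G.dist v2 a := hc.dist_triangle
  have cv2 : G.dist v2 v = G.dist v v2 := dcomm G v2 v
  have hv2cases : G.dist v2 a = G.dist z b + 1 ∨ G.dist v2 a + 1 = G.dist z b := by omega
  -- z and v2 are distinct at distance 2
  have hzz' : G.dist z z' = ℓ + 1 := by omega
  have hzne : z ≠ v2 := by
    intro hh
    rw [← hh] at hv2z'l
    omega
  have hzd2 : G.dist z v2 = 2 := by
    have hne0 : G.dist z v2 ≠ 0 := fun hh => hzne (dist_zero_eq hc hh)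
    have hne1 : G.dist z v2 ≠ 1 := by
      intro h1
      refine no_tie hG (dist_one_adj h1) b ?_
      rw [dcomm G b z, dcomm G b v2]
      omega
    have : G.dist z v2 ≤ G.dist z v + G.dist v v2 := hc.dist_triangle
    omega
  -- the median w of b z v2
  obtain ⟨w, hw1, hw2, hw3⟩ := median3 hG b z v2
  rw [mem_int] at hw1 hw2 hw3
  have cbz : G.dist b z = G.dist z b := dcomm G b z
  have cv2b : G.dist v2 b = G.dist b v2 := dcomm G v2 b
  have hwz : G.dist z w = 1 ∧ G.dist w v2 = 1 ∧ G.dist w b + 1 = G.dist z b := by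
    have czw : G.dist w z = G.dist z w := dcomm G w z
    have cwb : G.dist b w = G.dist w b := dcomm G b w
    have cv2w : G.dist v2 w = G.dist w v2 := dcomm G v2 w
    omega
  obtain ⟨hwz1, hwv21, hwb⟩ := hwz
  have hwzadj : G.Adj z w := dist_one_adj hwz1
  have hwv2adj : G.Adj w v2 := dist_one_adj hwv21
  have tieW := no_tie hG hab w
  have u1 : G.dist w a ≤ G.dist w z + G.dist z a := hc.dist_triangle
  have u2 : G.dist z a ≤ G.dist z w + G.dist w a := hc.dist_triangle
  have u3 : G.dist w a ≤ G.dist w b + 1 := by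
    have := hc.dist_triangle (u := w) (v := b) (w := a); omega
  have u4 : G.dist w a ≤ G.dist w v2 + G.dist v2 a := hc.dist_triangle
  have u5 : G.dist v2 a ≤ G.dist v2 w + G.dist w a := hc.dist_triangle
  have cwz2 : G.dist w z = G.dist z w := dcomm G w z
  have cv2w2 : G.dist v2 w = G.dist w v2 := dcomm G v2 w
  rcases hv2cases with hcA | hcB
  · -- v2 on the b-side: two medians of (z, v2, a)
    have hwa : G.dist w a = G.dist z b := by omega
    have hmedv : v ∈ interval G z v2 ∧ v ∈ interval G v2 a ∧ v ∈ interval G a z := by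
      refine ⟨?_, ?_, ?_⟩ <;> rw [mem_int]
      · omega
      · have c1 : G.dist v2 v = G.dist v v2 := dcomm G v2 v
        omega
      · have c1 : G.dist a v = G.dist v a := dcomm G a v
        have c2 : G.dist a z = G.dist z a := dcomm G a z
        omega
    have hmedw : w ∈ interval G z v2 ∧ w ∈ interval G v2 a ∧ w ∈ interval G a z := by
      refine ⟨?_, ?_, ?_⟩ <;> rw [mem_int]
      · omega
      · omega
      · have c1 : G.dist a w = G.dist w a := dcomm G a w
        have c2 : G.dist a z = G.dist z a := dcomm G a z
        omega
    have : v = w := (hG.2 z v2 a).unique hmedv hmedw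
    rw [this] at hvb hva
    omega
  · -- v2 on the a-side: descend
    have hwa : G.dist w a = G.dist z b := by omega
    have hwz' : G.dist w z' = G.dist v2 z' + 1 := by
      have d1 : G.dist w z' ≤ G.dist w v2 + G.dist v2 z' := hc.dist_triangle
      have d2 : G.dist z z' ≤ G.dist z w + G.dist w z' := hc.dist_triangle
      omega
    have hv2wI : v2 ∈ interval G w z' := by rw [mem_int]; omega
    refine IH (G.dist v2 z') (by omega) a b w v2 z' hab (by omega) hz' (by omega) hwv2adj hv2wI rfl

end MGP2
section MGP3

variable {X : Type*} {G : SimpleGraph X}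

lemma halfspace_convex (hG : IsMedianGraph G) {a b : X} (hab : G.Adj a b) :
    IsConvexSet G {z | G.dist z b < G.dist z a} := by
  have hc := hG.1
  suffices H : ∀ n : ℕ, ∀ z z' m : X, G.dist z b < G.dist z a → G.dist z' b < G.dist z' a →
      m ∈ interval G z z' → G.dist z m = n → G.dist m b < G.dist m a by
    intro z hz z' hz' m hm
    exact H (G.dist z m) z z' m hz hz' hm rfl
  intro n
  induction n with
  | zero =>
    intro z z' m hz hz' hm h0
    have : z = m := dist_zero_eq hc h0
    rw [← this]
    exact hz
  | succ n IHn =>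
    intro z z' m hz hz' hm hd
    have hd' : G.dist m z = n + 1 := by rw [dcomm G m z]; exact hd
    obtain ⟨u, hadj, h1, h2⟩ := exists_toward hc hd'
    have huI : u ∈ interval G z m := by
      rw [mem_int, dcomm G z u]
      rw [dcomm G m z] at hd'
      rw [dcomm G u m]
      omega
    obtain ⟨huzz', hmu⟩ := int_comp hc hm huI
    have hu : G.dist u b < G.dist u a := IHn z z' u hz hz' huzz' (by rw [dcomm G z u]; omega)
    by_contra hmW
    exact hs_step hG (G.dist m z') a b u m z' hab hu hz' hmW hadj.symm hmu rfl

lemma mem_int_of_halfspaces (hG : IsMedianGraph G) {x y p : X}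
    (H : ∀ u v : X, G.Adj u v → G.dist x u < G.dist x v → G.dist y u < G.dist y v →
      G.dist p u < G.dist p v) : p ∈ interval G x y := by
  have hc := hG.1
  by_contra hp
  obtain ⟨m, h1, h2, h3⟩ := median3 hG x y p
  have hmp : m ≠ p := fun h => hp (h ▸ h1)
  have hdm : G.dist p m ≠ 0 := by
    rw [dcomm G p m]
    exact fun hh => hmp (dist_zero_eq hc hh)
  obtain ⟨n, hn⟩ : ∃ n, G.dist p m = n + 1 := ⟨G.dist p m - 1, by omega⟩
  obtain ⟨v1, hadj, hd1, hd2⟩ := exists_toward hc hn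
  have hv1m : v1 ∈ interval G p m := by rw [mem_int]; omega
  obtain ⟨hv1x, -⟩ := int_comp hc h3 hv1m
  obtain ⟨hv1y, -⟩ := int_comp hc (int_symm h2) hv1m
  rw [mem_int] at hv1x hv1y
  have hx' : G.dist x v1 < G.dist x p := by
    rw [dcomm G x v1, dcomm G x p]; omega
  have hy' : G.dist y v1 < G.dist y p := by
    rw [dcomm G y v1, dcomm G y p]; omega
  have := H v1 p hadj.symm hx' hy'
  rw [SimpleGraph.dist_self] at this
  omega

end MGP3
section MGP4

variable {X : Type*} {G : SimpleGraph X}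

lemma gate_exists (hG : IsMedianGraph G) {C : Set X} (hC : IsConvexSet G C)
    (hCne : C.Nonempty) (x : X) : ∃ p, p ∈ C ∧ ∀ c ∈ C, p ∈ interval G x c := by
  have hc := hG.1
  obtain ⟨c0, hc0⟩ := hCne
  have hS : ((fun c => G.dist x c) '' C).Nonempty := ⟨_, c0, hc0, rfl⟩
  obtain ⟨p, hpC, hpk⟩ := Nat.sInf_mem hS
  have hpk' : G.dist x p = sInf ((fun c => G.dist x c) '' C) := hpk
  refine ⟨p, hpC, fun c hcC => ?_⟩
  obtain ⟨m, h1, h2, h3⟩ := median3 hG x p c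
  have hmC : m ∈ C := hC p hpC c hcC h2
  have hmin : sInf ((fun c => G.dist x c) '' C) ≤ G.dist x m :=
    Nat.sInf_le ⟨m, hmC, rfl⟩
  rw [mem_int] at h1
  have hmp : G.dist m p = 0 := by omega
  have : m = p := dist_zero_eq hc hmp
  rw [← this]
  exact int_symm h3

lemma proj_spec (hG : IsMedianGraph G) {C : Set X} (hC : IsConvexSet G C)
    (hCne : C.Nonempty) (x : X) :
    projOn G C x ∈ C ∧ ∀ c ∈ C, projOn G C x ∈ interval G x c := by
  have hex := gate_exists hG hC hCne x
  unfold projOn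
  rw [dif_pos hex]
  exact hex.choose_spec

lemma gate_unique (hc : G.Connected) {C : Set X} {x p q : X}
    (hp : p ∈ C ∧ ∀ c ∈ C, p ∈ interval G x c)
    (hq : q ∈ C ∧ ∀ c ∈ C, q ∈ interval G x c) : p = q := by
  have h1 := hp.2 q hq.1
  have h2 := hq.2 p hp.1
  rw [mem_int] at h1 h2
  have c1 : G.dist q p = G.dist p q := dcomm G q p
  have : G.dist p q = 0 := by omega
  exact dist_zero_eq hc this

lemma proj_mem (hG : IsMedianGraph G) {C : Set X} (hC : IsConvexSet G C)
    (hCne : C.Nonempty) (x : X) : projOn G C x ∈ C :=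
  (proj_spec hG hC hCne x).1

lemma proj_gate (hG : IsMedianGraph G) {C : Set X} (hC : IsConvexSet G C)
    (hCne : C.Nonempty) (x : X) {c : X} (hc : c ∈ C) :
    projOn G C x ∈ interval G x c :=
  (proj_spec hG hC hCne x).2 c hc

lemma proj_self (hG : IsMedianGraph G) {C : Set X} (hC : IsConvexSet G C)
    (hCne : C.Nonempty) {x : X} (hx : x ∈ C) : projOn G C x = x :=
  gate_unique hG.1 (proj_spec hG hC hCne x) ⟨hx, fun c _ => left_mem_int⟩

lemma proj_nonexp (hG : IsMedianGraph G) {C : Set X} (hC : IsConvexSet G C)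
    (hCne : C.Nonempty) (x y : X) :
    G.dist (projOn G C x) (projOn G C y) ≤ G.dist x y := by
  have hc := hG.1
  have e1 := proj_gate hG hC hCne x (proj_mem hG hC hCne y)
  have e2 := proj_gate hG hC hCne y (proj_mem hG hC hCne x)
  rw [mem_int] at e1 e2
  have t1 : G.dist x (projOn G C y) ≤ G.dist x y + G.dist y (projOn G C y) :=
    hc.dist_triangle
  have t2 : G.dist y (projOn G C x) ≤ G.dist y x + G.dist x (projOn G C x) :=
    hc.dist_triangle
  have c1 : G.dist y x = G.dist x y := dcomm G y x
  have c2 : G.dist (projOn G C y) (projOn G C x) = G.dist (projOn G C x) (projOn G C y) :=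
    dcomm G _ _
  omega

end MGP4
section MGP5

variable {X : Type*} {G : SimpleGraph X} {A B : Set X}

lemma gate_chain (hG : IsMedianGraph G) (hA : IsConvexSet G A) (hAne : A.Nonempty)
    (hB : IsConvexSet G B) (hBne : B.Nonempty) {b : X} (hb : b ∈ B) :
    projOn G A (projOn G B (projOn G A b)) = projOn G A b := by
  have hc := hG.1
  have haA : projOn G A b ∈ A := proj_mem hG hA hAne b
  have hb'B : projOn G B (projOn G A b) ∈ B := proj_mem hG hB hBne _
  have ha'A : projOn G A (projOn G B (projOn G A b)) ∈ A := proj_mem hG hA hAne _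
  have e1 := proj_gate hG hA hAne b ha'A
  have e2 := proj_gate hG hB hBne (projOn G A b) hb
  have e3 := proj_gate hG hA hAne (projOn G B (projOn G A b)) haA
  rw [mem_int] at e1 e2 e3
  have t := hc.dist_triangle (u := b) (v := projOn G B (projOn G A b))
    (w := projOn G A (projOn G B (projOn G A b)))
  have c1 : G.dist b (projOn G A b) = G.dist (projOn G A b) b := dcomm G _ _
  have c2 : G.dist (projOn G B (projOn G A b)) b
      = G.dist b (projOn G B (projOn G A b)) := dcomm G _ _
  have c4 : G.dist (projOn G B (projOn G A b)) (projOn G A b)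
      = G.dist (projOn G A b) (projOn G B (projOn G A b)) := dcomm G _ _
  have c5 : G.dist (projOn G A (projOn G B (projOn G A b))) (projOn G A b)
      = G.dist (projOn G A b) (projOn G A (projOn G B (projOn G A b))) := dcomm G _ _
  refine dist_zero_eq hc ?_
  omega

lemma proj_fix (hG : IsMedianGraph G) (hA : IsConvexSet G A) (hAne : A.Nonempty)
    (hB : IsConvexSet G B) (hBne : B.Nonempty) {a' : X} (ha' : a' ∈ projOn G A '' B) :
    projOn G A (projOn G B a') = a' := by
  obtain ⟨b, hb, rfl⟩ := ha'
  exact gate_chain hG hA hAne hB hBne hb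

lemma imageA_sub (hG : IsMedianGraph G) (hA : IsConvexSet G A) (hAne : A.Nonempty)
    {a' : X} (ha' : a' ∈ projOn G A '' B) : a' ∈ A := by
  obtain ⟨b, hb, rfl⟩ := ha'
  exact proj_mem hG hA hAne b

lemma proj_iso (hG : IsMedianGraph G) (hA : IsConvexSet G A) (hAne : A.Nonempty)
    (hB : IsConvexSet G B) (hBne : B.Nonempty) {a1 a2 : X}
    (h1 : a1 ∈ projOn G A '' B) (h2 : a2 ∈ projOn G A '' B) :
    G.dist (projOn G B a1) (projOn G B a2) = G.dist a1 a2 := by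
  have le1 := proj_nonexp hG hB hBne a1 a2
  have le2 := proj_nonexp hG hA hAne (projOn G B a1) (projOn G B a2)
  rw [proj_fix hG hA hAne hB hBne h1, proj_fix hG hA hAne hB hBne h2] at le2
  omega

lemma proj_dconst (hG : IsMedianGraph G) (hA : IsConvexSet G A) (hAne : A.Nonempty)
    (hB : IsConvexSet G B) (hBne : B.Nonempty) {a1 a2 : X}
    (h1 : a1 ∈ projOn G A '' B) (h2 : a2 ∈ projOn G A '' B) :
    G.dist a1 (projOn G B a1) = G.dist a2 (projOn G B a2) := by
  have ha1A : a1 ∈ A := imageA_sub hG hA hAne h1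
  have hb2B : projOn G B a2 ∈ B := proj_mem hG hB hBne a2
  have e1 := proj_gate hG hB hBne a1 hb2B
  have e2 := proj_gate hG hA hAne (projOn G B a2) ha1A
  rw [proj_fix hG hA hAne hB hBne h2] at e2
  rw [mem_int] at e1 e2
  have hiso := proj_iso hG hA hAne hB hBne h1 h2
  have c1 : G.dist (projOn G B a2) a1 = G.dist a1 (projOn G B a2) := dcomm G _ _
  have c2 : G.dist a2 a1 = G.dist a1 a2 := dcomm G _ _
  have c3 : G.dist (projOn G B a2) a2 = G.dist a2 (projOn G B a2) := dcomm G _ _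
  omega

lemma proj_closure (hG : IsMedianGraph G) (hA : IsConvexSet G A) (hAne : A.Nonempty)
    (hB : IsConvexSet G B) (hBne : B.Nonempty) {p a' m : X}
    (hp : p ∈ projOn G A '' B) (ha' : a' ∈ projOn G A '' B)
    (hmA : m ∈ A) (hm : m ∈ interval G p a') : m ∈ projOn G A '' B := by
  have hc := hG.1
  have hq'B : projOn G B m ∈ B := proj_mem hG hB hBne m
  have hm1A' : projOn G A (projOn G B m) ∈ projOn G A '' B := ⟨_, hq'B, rfl⟩
  suffices hmm : m = projOn G A (projOn G B m) by rw [hmm]; exact hm1A'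
  have hfix : projOn G B (projOn G A (projOn G B m)) = projOn G B m :=
    gate_chain hG hB hBne hA hAne hmA
  have hq0B : projOn G B p ∈ B := proj_mem hG hB hBne p
  have hbpB : projOn G B a' ∈ B := proj_mem hG hB hBne a'
  have e1 := proj_gate hG hA hAne (projOn G B m) hmA
  have e2 := proj_gate hG hB hBne m hq0B
  have e3 := proj_gate hG hB hBne m hbpB
  rw [mem_int] at e1 e2 e3 hm
  have t4 : G.dist m (projOn G B p) ≤ G.dist m p + G.dist p (projOn G B p) :=
    hc.dist_triangle
  have t5 : G.dist m (projOn G B a') ≤ G.dist m a' + G.dist a' (projOn G B a') :=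
    hc.dist_triangle
  have h7 : G.dist (projOn G B p) (projOn G B a') = G.dist p a' :=
    proj_iso hG hA hAne hB hBne hp ha'
  have h8 : G.dist p (projOn G B p)
      = G.dist (projOn G A (projOn G B m)) (projOn G B (projOn G A (projOn G B m))) :=
    proj_dconst hG hA hAne hB hBne hp hm1A'
  rw [hfix] at h8
  have h9 : G.dist a' (projOn G B a')
      = G.dist (projOn G A (projOn G B m)) (projOn G B (projOn G A (projOn G B m))) :=
    proj_dconst hG hA hAne hB hBne ha' hm1A'
  rw [hfix] at h9
  have t6 : G.dist (projOn G B p) (projOn G B a')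
      ≤ G.dist (projOn G B p) (projOn G B m) + G.dist (projOn G B m) (projOn G B a') :=
    hc.dist_triangle
  have c1 : G.dist m p = G.dist p m := dcomm G _ _
  have c2 : G.dist (projOn G B m) (projOn G B p)
      = G.dist (projOn G B p) (projOn G B m) := dcomm G _ _
  have c3 : G.dist (projOn G A (projOn G B m)) (projOn G B m)
      = G.dist (projOn G B m) (projOn G A (projOn G B m)) := dcomm G _ _
  have c4 : G.dist (projOn G A (projOn G B m)) m
      = G.dist m (projOn G A (projOn G B m)) := dcomm G _ _
  have c5 : G.dist (projOn G B m) m = G.dist m (projOn G B m) := dcomm G _ _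
  refine dist_zero_eq hc ?_
  omega

end MGP5
section MGP6

variable {X : Type*} {G : SimpleGraph X} {A B : Set X}

lemma masterA (hG : IsMedianGraph G) (hA : IsConvexSet G A) (hAne : A.Nonempty)
    (hB : IsConvexSet G B) (hBne : B.Nonempty) {a0 a' : X}
    (h0 : a0 ∈ A) (ha' : a' ∈ projOn G A '' B) :
    projOn G A (projOn G B a0) ∈ interval G a0 a' := by
  have hc := hG.1
  have hq0B : projOn G B a0 ∈ B := proj_mem hG hB hBne a0
  have hgA' : projOn G A (projOn G B a0) ∈ projOn G A '' B := ⟨_, hq0B, rfl⟩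
  have hgA : projOn G A (projOn G B a0) ∈ A := proj_mem hG hA hAne _
  have ha'A : a' ∈ A := imageA_sub hG hA hAne ha'
  obtain ⟨m, h1, h2, h3⟩ := median3 hG a0 (projOn G A (projOn G B a0)) a'
  have hmA : m ∈ A := hA _ hgA a' ha'A h2
  have hmA' : m ∈ projOn G A '' B := proj_closure hG hA hAne hB hBne hgA' ha' hmA h2
  -- pb g = q0
  have hfix : projOn G B (projOn G A (projOn G B a0)) = projOn G B a0 :=
    gate_chain hG hB hBne hA hAne h0
  have hbmB : projOn G B m ∈ B := proj_mem hG hB hBne m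
  have e1 := proj_gate hG hB hBne a0 hbmB
  have e2 : G.dist (projOn G B (projOn G A (projOn G B a0))) (projOn G B m)
      = G.dist (projOn G A (projOn G B a0)) m :=
    proj_iso hG hA hAne hB hBne hgA' hmA'
  rw [hfix] at e2
  have t3 : G.dist a0 (projOn G B m) ≤ G.dist a0 m + G.dist m (projOn G B m) :=
    hc.dist_triangle
  have e4 : G.dist m (projOn G B m)
      = G.dist (projOn G A (projOn G B a0)) (projOn G B (projOn G A (projOn G B a0))) :=
    proj_dconst hG hA hAne hB hBne hmA' hgA'
  rw [hfix] at e4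
  have e5 := proj_gate hG hA hAne (projOn G B a0) h0
  rw [mem_int] at e1 e5 h1
  have c1 : G.dist (projOn G B a0) a0 = G.dist a0 (projOn G B a0) := dcomm G _ _
  have c2 : G.dist (projOn G A (projOn G B a0)) a0
      = G.dist a0 (projOn G A (projOn G B a0)) := dcomm G _ _
  have c3 : G.dist (projOn G B a0) (projOn G A (projOn G B a0))
      = G.dist (projOn G A (projOn G B a0)) (projOn G B a0) := dcomm G _ _
  have c4 : G.dist m (projOn G A (projOn G B a0))
      = G.dist (projOn G A (projOn G B a0)) m := dcomm G _ _
  have hmg : m = projOn G A (projOn G B a0) := by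
    refine dist_zero_eq hc ?_
    omega
  rw [← hmg]
  exact int_symm h3

lemma gateA' (hG : IsMedianGraph G) (hA : IsConvexSet G A) (hAne : A.Nonempty)
    (hB : IsConvexSet G B) (hBne : B.Nonempty) (x : X) {a' : X}
    (ha' : a' ∈ projOn G A '' B) :
    projOn G A (projOn G B (projOn G A x)) ∈ interval G x a' := by
  have hc := hG.1
  have h0 : projOn G A x ∈ A := proj_mem hG hA hAne x
  have hM := masterA hG hA hAne hB hBne h0 ha'
  have ha'A : a' ∈ A := imageA_sub hG hA hAne ha'
  have hgA : projOn G A (projOn G B (projOn G A x)) ∈ A := proj_mem hG hA hAne _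
  have e1 := proj_gate hG hA hAne x ha'A
  have e2 := proj_gate hG hA hAne x hgA
  rw [mem_int] at e1 e2 hM ⊢
  have t1 : G.dist x a'
      ≤ G.dist x (projOn G A (projOn G B (projOn G A x)))
        + G.dist (projOn G A (projOn G B (projOn G A x))) a' := hc.dist_triangle
  omega

lemma bullet1 (hG : IsMedianGraph G) (hA : IsConvexSet G A) (hAne : A.Nonempty)
    (hB : IsConvexSet G B) (hBne : B.Nonempty) (x : X) :
    projOn G A (projOn G B x) = projOn G A (projOn G B (projOn G A x)) := by
  have hc := hG.1
  have hqB : projOn G B x ∈ B := proj_mem hG hB hBne x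
  have hpA' : projOn G A (projOn G B x) ∈ projOn G A '' B := ⟨_, hqB, rfl⟩
  have hGxA' : projOn G A (projOn G B (projOn G A x)) ∈ projOn G A '' B :=
    ⟨_, proj_mem hG hB hBne (projOn G A x), rfl⟩
  have hGxA : projOn G A (projOn G B (projOn G A x)) ∈ A := proj_mem hG hA hAne _
  have hpA : projOn G A (projOn G B x) ∈ A := proj_mem hG hA hAne _
  have hpI : projOn G A (projOn G B x)
      ∈ interval G x (projOn G A (projOn G B (projOn G A x))) := by
    apply mem_int_of_halfspaces hG
    intro u v huv hxW hGW
    by_cases hq : G.dist (projOn G B x) u < G.dist (projOn G B x) v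
    · -- the B-gate of x is on the same side
      have hPI : projOn G A (projOn G B x)
          ∈ interval G (projOn G B x) (projOn G A (projOn G B (projOn G A x))) :=
        proj_gate hG hA hAne (projOn G B x) hGxA
      exact halfspace_convex hG huv.symm (projOn G B x) hq
        (projOn G A (projOn G B (projOn G A x))) hGW hPI
    · have hqv : G.dist (projOn G B x) v < G.dist (projOn G B x) u := by
        have := no_tie hG huv (projOn G B x)

        omega
      -- every point of B is on the v-side
      have hBside : ∀ b'' ∈ B, G.dist b'' v < G.dist b'' u := by
        intro b'' hb''
        by_contra hbW
        have hbW' : G.dist b'' u < G.dist b'' v := by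
          have := no_tie hG huv b''
          omega
        have hqI : projOn G B x ∈ interval G x b'' := proj_gate hG hB hBne x hb''
        have := halfspace_convex hG huv.symm x hxW b'' hbW' hqI
        simp only [Set.mem_setOf_eq] at this
        omega
      by_contra hpW
      have hpW' : G.dist (projOn G A (projOn G B x)) v
          < G.dist (projOn G A (projOn G B x)) u := by
        have := no_tie hG huv (projOn G A (projOn G B x))
        omega
      have hu' := hBside _ (proj_mem hG hB hBne (projOn G A (projOn G B (projOn G A x))))
      have hfix : projOn G A (projOn G B (projOn G A (projOn G B (projOn G A x))))
          = projOn G A (projOn G B (projOn G A x)) :=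
        proj_fix hG hA hAne hB hBne hGxA'
      have hGI : projOn G A (projOn G B (projOn G A x))
          ∈ interval G (projOn G B (projOn G A (projOn G B (projOn G A x))))
            (projOn G A (projOn G B x)) := by
        have := proj_gate hG hA hAne
          (projOn G B (projOn G A (projOn G B (projOn G A x)))) hpA
        rw [hfix] at this
        exact this
      have := halfspace_convex hG huv _ hu' _ hpW' hGI
      simp only [Set.mem_setOf_eq] at this
      omega
  have e1 := gateA' hG hA hAne hB hBne x hpA'
  rw [mem_int] at e1 hpI
  have c1 : G.dist (projOn G A (projOn G B (projOn G A x))) (projOn G A (projOn G B x))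
      = G.dist (projOn G A (projOn G B x)) (projOn G A (projOn G B (projOn G A x))) :=
    dcomm G _ _
  refine dist_zero_eq hc ?_
  omega

end MGP6
section MGP7

variable {X : Type*} {G : SimpleGraph X} {A B : Set X}

lemma proj_spec_of_ex {C : Set X} {x : X}
    (hex : ∃ p, p ∈ C ∧ ∀ c ∈ C, p ∈ interval G x c) :
    projOn G C x ∈ C ∧ ∀ c ∈ C, projOn G C x ∈ interval G x c := by
  unfold projOn
  rw [dif_pos hex]
  exact hex.choose_spec

lemma bullet2 (hG : IsMedianGraph G) (hA : IsConvexSet G A) (hAne : A.Nonempty)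
    (hB : IsConvexSet G B) (hBne : B.Nonempty) (x : X) :
    projOn G A (projOn G B x) = projOn G (projOn G A '' B) x := by
  have hc := hG.1
  have hqB : projOn G B x ∈ B := proj_mem hG hB hBne x
  have hgate : projOn G A (projOn G B x) ∈ projOn G A '' B
      ∧ ∀ c ∈ projOn G A '' B, projOn G A (projOn G B x) ∈ interval G x c := by
    refine ⟨⟨_, hqB, rfl⟩, fun c hcA' => ?_⟩
    rw [bullet1 hG hA hAne hB hBne x]
    exact gateA' hG hA hAne hB hBne x hcA'
  exact gate_unique hc hgate (proj_spec_of_ex ⟨_, hgate⟩)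

lemma interAB (hG : IsMedianGraph G) (hA : IsConvexSet G A) (hAne : A.Nonempty)
    (hB : IsConvexSet G B) (hBne : B.Nonempty) (hABne : (A ∩ B).Nonempty) :
    projOn G A '' B = A ∩ B := by
  have hc := hG.1
  apply Set.Subset.antisymm
  · rintro _ ⟨b, hb, rfl⟩
    refine ⟨proj_mem hG hA hAne b, ?_⟩
    obtain ⟨c, hcA, hcB⟩ := hABne
    obtain ⟨m, h1, h2, h3⟩ := median3 hG b (projOn G A b) c
    have hmA : m ∈ A := hA _ (proj_mem hG hA hAne b) c hcA h2
    have hmB : m ∈ B := hB c hcB b hb h3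
    have e1 := proj_gate hG hA hAne b hmA
    rw [mem_int] at e1 h1
    have c1 : G.dist (projOn G A b) m = G.dist m (projOn G A b) := dcomm G _ _
    have : m = projOn G A b := dist_zero_eq hc (by omega)
    rw [← this]
    exact hmB
  · rintro c ⟨hcA, hcB⟩
    exact ⟨c, hcB, proj_self hG hA hAne hcA⟩

end MGP7
theorem proj_comp_proj (G : SimpleGraph X) (hG : IsMedianGraph G)
    (A B : Set X) (hA : IsConvexSet G A) (hB : IsConvexSet G B)
    (hAne : A.Nonempty) (hBne : B.Nonempty) :
    (projOn G A ∘ projOn G B ∘ projOn G A = projOn G A ∘ projOn G B) ∧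
    (projOn G A ∘ projOn G B = projOn G (projOn G A '' B)) ∧
    (∀ x ∈ projOn G A '' B,
        projOn G B x ∈ projOn G B '' A ∧ projOn G A (projOn G B x) = x) ∧
    (∀ y ∈ projOn G B '' A,
        projOn G A y ∈ projOn G A '' B ∧ projOn G B (projOn G A y) = y) ∧
    (∀ x ∈ projOn G A '' B, ∀ x' ∈ projOn G A '' B,
        (G.Adj x x' ↔ G.Adj (projOn G B x) (projOn G B x'))) ∧
    ((A ∩ B).Nonempty →
        projOn G A ∘ projOn G B = projOn G B ∘ projOn G A ∧
        projOn G A ∘ projOn G B = projOn G (A ∩ B)) := by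
  have hc := hG.1
  refine ⟨?_, ?_, ?_, ?_, ?_, ?_⟩
  · funext x
    simp only [Function.comp_apply]
    exact (bullet1 hG hA hAne hB hBne x).symm
  · funext x
    simp only [Function.comp_apply]
    exact bullet2 hG hA hAne hB hBne x
  · rintro _ ⟨b, hb, rfl⟩
    constructor
    · exact ⟨projOn G A b, proj_mem hG hA hAne b, rfl⟩
    · exact gate_chain hG hA hAne hB hBne hb
  · rintro _ ⟨a, ha, rfl⟩
    constructor
    · exact ⟨projOn G B a, proj_mem hG hB hBne a, rfl⟩
    · exact gate_chain hG hB hBne hA hAne ha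
  · intro x hx x' hx'
    have hiso := proj_iso hG hA hAne hB hBne hx hx'
    constructor
    · intro h
      exact dist_one_adj (by rw [hiso]; exact adj_dist_one h)
    · intro h
      exact dist_one_adj (by rw [← hiso]; exact adj_dist_one h)
  · intro hABne
    have hI := interAB hG hA hAne hB hBne hABne
    have hI' := interAB hG hB hBne hA hAne (by rwa [Set.inter_comm] at hABne)
    constructor
    · funext x
      simp only [Function.comp_apply]
      rw [bullet2 hG hA hAne hB hBne x, bullet2 hG hB hBne hA hAne x, hI, hI']
      rw [Set.inter_comm B A]
    · funext x
      simp only [Function.comp_apply]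
      rw [bullet2 hG hA hAne hB hBne x, hI]
end

section
/- A median graph has all hyperplanes finite (i.e., each nontrivial half-space has finite edge boundary) if and only if each half-space is non-nested with only finitely many others. -/
open SimpleGraph

variable {X : Type*}

namespace MedAux

variable {G : SimpleGraph X}

/-- The halfspace side determined by an oriented edge (Djoković set). -/
def WS (G : SimpleGraph X) (a b : X) : Set X := {z | G.dist a z < G.dist b z}

lemma mem_intv {x y z : X} (h : z ∈ interval G x y) :
    G.dist x z + G.dist z y = G.dist x y := h

lemma intv_of {x y z : X} (h : G.dist x z + G.dist z y = G.dist x y) :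
    z ∈ interval G x y := h

lemma noties (hG : IsMedianGraph G) {a b : X} (hab : G.Adj a b) (z : X) :
    G.dist a z ≠ G.dist b z := by
  intro he
  obtain ⟨m, h1, h2, h3⟩ := (hG.2 a b z).exists
  have hd : G.dist a b = 1 := dist_eq_one_iff_adj.mpr hab
  have h1' : G.dist a m + G.dist m b = 1 := by rw [← hd]; exact h1
  have h2' : G.dist b m + G.dist m z = G.dist b z := h2
  have h3' : G.dist z m + G.dist m a = G.dist z a := h3
  have hma : G.dist a m = 0 ∨ G.dist m b = 0 := by omega
  rcases hma with h0 | h0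
  · have ham : a = m := (hG.1.dist_eq_zero_iff).mp h0
    rw [← ham] at h2' h3'
    have c1 : G.dist b a = G.dist a b := dist_comm
    have c2 : G.dist z a = G.dist a z := dist_comm
    omega
  · have hmb : m = b := (hG.1.dist_eq_zero_iff).mp h0
    rw [hmb] at h3'
    have c1 : G.dist z b = G.dist b z := dist_comm
    have c2 : G.dist z a = G.dist a z := dist_comm
    have c3 : G.dist b a = G.dist a b := dist_comm
    omega

lemma dichotomy (hG : IsMedianGraph G) {a b : X} (hab : G.Adj a b) (z : X) :
    G.dist b z = G.dist a z + 1 ∨ G.dist a z = G.dist b z + 1 := by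
  have t1 : G.dist a z ≤ G.dist a b + G.dist b z := hG.1.dist_triangle
  have t2 : G.dist b z ≤ G.dist b a + G.dist a z := hG.1.dist_triangle
  have hd : G.dist a b = 1 := dist_eq_one_iff_adj.mpr hab
  have c : G.dist b a = G.dist a b := dist_comm
  have := noties hG hab z
  omega

lemma ws_dist (hG : IsMedianGraph G) {a b : X} (hab : G.Adj a b) {z : X}
    (hz : z ∈ WS G a b) : G.dist b z = G.dist a z + 1 := by
  have hz' : G.dist a z < G.dist b z := hz
  rcases dichotomy hG hab z with h | h <;> omega

lemma ws_dist' (hG : IsMedianGraph G) {a b : X} (hab : G.Adj a b) {z : X}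
    (hz : z ∉ WS G a b) : G.dist a z = G.dist b z + 1 := by
  have hz' : ¬ G.dist a z < G.dist b z := hz
  rcases dichotomy hG hab z with h | h <;> omega

lemma ws_compl (hG : IsMedianGraph G) {a b : X} (hab : G.Adj a b) :
    (WS G a b)ᶜ = WS G b a := by
  ext z
  have := dichotomy hG hab z
  simp only [WS, Set.mem_compl_iff, Set.mem_setOf_eq, not_lt]
  omega

lemma ws_star (hc : G.Connected) {a b z : X} (hz : z ∈ WS G a b) :
    interval G a z ⊆ WS G a b := by
  intro w hw
  by_contra hnw
  have hnw' : G.dist b w ≤ G.dist a w := not_lt.mp hnw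
  have hw' : G.dist a w + G.dist w z = G.dist a z := hw
  have ht : G.dist b z ≤ G.dist b w + G.dist w z := hc.dist_triangle
  have hz' : G.dist a z < G.dist b z := hz
  omega

lemma triangle_free (hG : IsMedianGraph G) {a b c : X}
    (h1 : G.Adj a b) (h2 : G.Adj b c) (h3 : G.Adj a c) : False := by
  have := noties hG h2 a
  have c1 : G.dist b a = 1 := dist_eq_one_iff_adj.mpr h1.symm
  have c2 : G.dist c a = 1 := dist_eq_one_iff_adj.mpr h3.symm
  omega

lemma ws_convex (hG : IsMedianGraph G) {a b : X} (hab : G.Adj a b) :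
    IsConvexSet G (WS G a b) := by
  classical
  have hc := hG.1
  intro c1 hcc1 c2 hcc2 w0 hw0
  by_contra hw0bad
  set Bad : X → X → X → Prop := fun u v x =>
    u ∈ WS G a b ∧ v ∈ WS G a b ∧ x ∈ interval G u v ∧ x ∉ WS G a b with hBadDef
  have hbad0 : ∃ n, ∃ p : X × X × X, Bad p.1 p.2.1 p.2.2 ∧ G.dist p.1 p.2.1 = n :=
    ⟨_, ⟨c1, c2, w0⟩, ⟨hcc1, hcc2, hw0, hw0bad⟩, rfl⟩
  set n₀ := Nat.find hbad0 with hn₀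
  have hminn : ∀ u v x : X, Bad u v x → n₀ ≤ G.dist u v := by
    intro u v x hb
    by_contra hlt
    exact Nat.find_min hbad0 (not_le.mp hlt) ⟨⟨u, v, x⟩, hb, rfl⟩
  have hBsymm : ∀ u v x, Bad u v x → Bad v u x := by
    rintro u v x ⟨h1, h2, h3, h4⟩
    refine ⟨h2, h1, ?_, h4⟩
    have h3' := mem_intv h3
    have d1 : G.dist v x = G.dist x v := dist_comm
    have d2 : G.dist u x = G.dist x u := dist_comm
    have d3 : G.dist v u = G.dist u v := dist_comm
    exact intv_of (by omega)
  have step1 : ∀ u v x : X, Bad u v x → G.dist u v = n₀ → u ∈ interval G a x := by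
    intro u v x hb hd
    obtain ⟨hu, hv, hx, hxbad⟩ := hb
    obtain ⟨m, hm1, hm2, hm3⟩ := (hG.2 a u x).exists
    have hmW : m ∈ WS G a b := ws_star hc hu hm1
    have e1 := mem_intv hm1
    have e2 := mem_intv hm2
    have e3 := mem_intv hm3
    have e4 := mem_intv hx
    have t1 : G.dist m v ≤ G.dist m x + G.dist x v := hc.dist_triangle
    have t2 : G.dist u v ≤ G.dist u m + G.dist m v := hc.dist_triangle
    have d1 : G.dist m x = G.dist x m := dist_comm
    have d2 : G.dist u m = G.dist m u := dist_comm
    have hmvx : x ∈ interval G m v := intv_of (by omega)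
    have hmv : n₀ ≤ G.dist m v := hminn m v x ⟨hmW, hv, hmvx, hxbad⟩
    have hum0 : G.dist u m = 0 := by omega
    have hmu : u = m := hc.dist_eq_zero_iff.mp hum0
    rw [← hmu] at e3
    have d3 : G.dist x u = G.dist u x := dist_comm
    have d4 : G.dist u a = G.dist a u := dist_comm
    have d5 : G.dist a x = G.dist x a := dist_comm
    exact intv_of (by omega)
  have hbad1 : ∃ s, ∃ p : X × X × X, Bad p.1 p.2.1 p.2.2 ∧ G.dist p.1 p.2.1 = n₀ ∧
      G.dist b p.2.2 = s := by
    obtain ⟨p, hp, hpd⟩ := Nat.find_spec hbad0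
    exact ⟨_, p, hp, hpd, rfl⟩
  set s₀ := Nat.find hbad1 with hs₀
  obtain ⟨⟨z1, z2, w⟩, hBz0, hnz0, hsz0⟩ := Nat.find_spec hbad1
  have hmins : ∀ u v x : X, Bad u v x → G.dist u v = n₀ → s₀ ≤ G.dist b x := by
    intro u v x hb hd
    by_contra hlt
    exact Nat.find_min hbad1 (not_le.mp hlt) ⟨⟨u, v, x⟩, hb, hd, rfl⟩
  have hBzfull : Bad z1 z2 w := hBz0
  have hnz : G.dist z1 z2 = n₀ := hnz0
  have hsz : G.dist b w = s₀ := hsz0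
  clear hBz0 hnz0 hsz0
  obtain ⟨hz1, hz2, hwI, hwbad⟩ := hBzfull
  have hBzfull : Bad z1 z2 w := ⟨hz1, hz2, hwI, hwbad⟩
  have hI1 : z1 ∈ interval G a w := step1 z1 z2 w hBzfull hnz
  have hBz' : Bad z2 z1 w := hBsymm _ _ _ hBzfull
  have hnz' : G.dist z2 z1 = n₀ := by rw [SimpleGraph.dist_comm]; exact hnz
  have hI2 : z2 ∈ interval G a w := step1 z2 z1 w hBz' hnz'
  have key : ∀ u v : X, Bad u v w → G.dist u v = n₀ → u ∈ interval G a w →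
      G.dist u w = 1 := by
    intro u v hb hd hIu
    obtain ⟨hu, hv, hxw, hwb⟩ := hb
    obtain ⟨m, k1, k2, k3⟩ := (hG.2 b u w).exists
    have e1 := mem_intv k1
    have e2 := mem_intv k2
    have e3 := mem_intv k3
    have eIu := mem_intv hIu
    have eI := mem_intv hxw
    have du : G.dist b u = G.dist a u + 1 := ws_dist hG hab hu
    have dw : G.dist a w = G.dist b w + 1 := ws_dist' hG hab hwb
    have hwba : w ∈ WS G b a := by
      show G.dist b w < G.dist a w; omega
    have hmI : m ∈ interval G b w := by
      have d1 : G.dist w m = G.dist m w := dist_comm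
      have d2 : G.dist m b = G.dist b m := dist_comm
      have d3 : G.dist w b = G.dist b w := dist_comm
      exact intv_of (by omega)
    have hmW : m ∈ WS G b a := ws_star hc hwba hmI
    have hmbad : m ∉ WS G a b := by
      have h' : G.dist b m < G.dist a m := hmW
      intro hcon
      have h'' : G.dist a m < G.dist b m := hcon
      omega
    have t1 : G.dist m v ≤ G.dist m w + G.dist w v := hc.dist_triangle
    have t2 : G.dist u v ≤ G.dist u m + G.dist m v := hc.dist_triangle
    have d4 : G.dist u m = G.dist m u := dist_comm
    have hmuv : m ∈ interval G u v := intv_of (by omega)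
    have hs' : s₀ ≤ G.dist b m := hmins u v m ⟨hu, hv, hmuv, hmbad⟩ hd
    have hne : G.dist u w ≠ 0 := by
      intro h0
      have huw : u = w := hc.dist_eq_zero_iff.mp h0
      rw [huw] at hu
      exact hwb hu
    have d5 : G.dist w m = G.dist m w := dist_comm
    have d6 : G.dist m b = G.dist b m := dist_comm
    have d7 : G.dist w b = G.dist b w := dist_comm
    omega
  have hp : G.dist z1 w = 1 := key z1 z2 hBzfull hnz hI1
  have hq : G.dist z2 w = 1 := key z2 z1 hBz' hnz' hI2
  have eI := mem_intv hwI
  have cwz2 : G.dist w z2 = G.dist z2 w := dist_comm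
  have hn2 : n₀ = 2 := by omega
  -- distances around
  have eI1 := mem_intv hI1
  have eI2 := mem_intv hI2
  have dz1 : G.dist b z1 = G.dist a z1 + 1 := ws_dist hG hab hz1
  have dz2 : G.dist b z2 = G.dist a z2 + 1 := ws_dist hG hab hz2
  have dw : G.dist a w = G.dist b w + 1 := ws_dist' hG hab hwbad
  -- median of z1 z2 a
  obtain ⟨m, j1, j2, j3⟩ := (hG.2 z1 z2 a).exists
  have f1 := mem_intv j1
  have f2 := mem_intv j2
  have f3 := mem_intv j3
  have c1 : G.dist z2 a = G.dist a z2 := dist_comm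
  have c2 : G.dist m a = G.dist a m := dist_comm
  have c3 : G.dist m z1 = G.dist z1 m := dist_comm
  have c4 : G.dist z2 m = G.dist m z2 := dist_comm
  have hdm1 : G.dist z1 m = 1 := by omega
  have hdm2 : G.dist m z2 = 1 := by omega
  have hdam : G.dist a m + 1 = G.dist a z1 := by omega
  have hmWS : m ∈ WS G a b := ws_star hc hz1 j3
  have dbm : G.dist b m = G.dist a m + 1 := ws_dist hG hab hmWS
  have tbm : G.dist b z1 ≤ G.dist b m + G.dist m z1 := hc.dist_triangle
  have tmw1 : G.dist m w ≤ G.dist m z1 + G.dist z1 w := hc.dist_triangle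
  have tmw2 : G.dist a w ≤ G.dist a m + G.dist m w := hc.dist_triangle
  have hmw2 : G.dist m w = 2 := by omega
  -- median of m w b
  obtain ⟨y, l1, l2, l3⟩ := (hG.2 m w b).exists
  have g1 := mem_intv l1
  have g2 := mem_intv l2
  have g3 := mem_intv l3
  have c5 : G.dist w b = G.dist b w := dist_comm
  have c6 : G.dist y b = G.dist b y := dist_comm
  have c7 : G.dist y m = G.dist m y := dist_comm
  have c8 : G.dist w y = G.dist y w := dist_comm
  have hmy : G.dist m y = 1 := by omega
  have hyw : G.dist y w = 1 := by omega
  have hby : G.dist b y + 1 = G.dist b w := by omega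
  -- d z1 y = 2 and d z2 y = 2
  have hadjmy : G.Adj m y := dist_eq_one_iff_adj.mp hmy
  have tz1y : G.dist z1 y ≤ G.dist z1 m + G.dist m y := hc.dist_triangle
  have tz2y : G.dist z2 y ≤ G.dist z2 m + G.dist m y := hc.dist_triangle
  have hne1 : G.dist z1 y ≠ 0 := by
    intro h0
    have hzz : z1 = y := hc.dist_eq_zero_iff.mp h0
    rw [← hzz] at hby
    omega
  have hne2 : G.dist z2 y ≠ 0 := by
    intro h0
    have hzz : z2 = y := hc.dist_eq_zero_iff.mp h0
    rw [← hzz] at hby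
    omega
  have hnoties1 := noties hG hadjmy z1
  have hnoties2 := noties hG hadjmy z2
  have c9 : G.dist m z1 = G.dist z1 m := dist_comm
  have c10 : G.dist y z1 = G.dist z1 y := dist_comm
  have c11 : G.dist m z2 = G.dist z2 m := dist_comm
  have c12 : G.dist y z2 = G.dist z2 y := dist_comm
  have hz1y : G.dist z1 y = 2 := by
    clear * - hnoties1 hne1 tz1y c9 c10 hdm1 hmy
    omega
  have hz2y : G.dist z2 y = 2 := by
    clear * - hnoties2 hne2 tz2y c11 c12 hdm2 hmy
    omega
  clear hne1 hne2 hnoties1 hnoties2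
  -- two medians of (z1, z2, y)
  have c13 : G.dist y w = G.dist w y := dist_comm
  have c14 : G.dist y z1 = G.dist z1 y := dist_comm
  have c15 : G.dist w z1 = G.dist z1 w := dist_comm
  have hmmed : m ∈ interval G z1 z2 ∧ m ∈ interval G z2 y ∧ m ∈ interval G y z1 :=
    ⟨j1, intv_of (by clear * - c4 hdm2 hmy hz2y; omega),
      intv_of (by clear * - c7 hmy c9 hdm1 c14 hz1y; omega)⟩
  have hwmed : w ∈ interval G z1 z2 ∧ w ∈ interval G z2 y ∧ w ∈ interval G y z1 :=
    ⟨hwI, intv_of (by clear * - hq c13 hyw hz2y c12; omega),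
      intv_of (by clear * - hyw c15 hp c14 hz1y; omega)⟩
  have hmw := (hG.2 z1 z2 y).unique hmmed hwmed
  rw [hmw] at hdam
  clear * - hdam eI1 hp
  omega

lemma ws_halfspace (hG : IsMedianGraph G) {a b : X} (hab : G.Adj a b) :
    IsHalfspace G (WS G a b) :=
  ⟨ws_convex hG hab, by rw [ws_compl hG hab]; exact ws_convex hG hab.symm⟩

lemma halfspace_eq_ws (hG : IsMedianGraph G) {K : Set X} (hK : IsHalfspace G K)
    {u v : X} (hu : u ∈ K) (hv : v ∉ K) (huv : G.Adj u v) : K = WS G u v := by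
  have hc := hG.1
  have hd1 : G.dist u v = 1 := SimpleGraph.dist_eq_one_iff_adj.mpr huv
  ext z
  simp only [WS, Set.mem_setOf_eq]
  constructor
  · intro hz
    by_contra hle
    rcases dichotomy hG huv z with h | h
    · exact hle (by omega)
    · have hvI : v ∈ interval G u z := intv_of (by omega)
      exact hv (hK.1 u hu z hz hvI)
  · intro hz
    by_contra hzK
    have h : G.dist v z = G.dist u z + 1 := by
      rcases dichotomy hG huv z with h | h <;> omega
    have cvu : G.dist v u = G.dist u v := SimpleGraph.dist_comm
    have huI : u ∈ interval G v z := intv_of (by omega)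
    exact (hK.2 v hv z hzK huI) hu

lemma boundary_convex (hG : IsMedianGraph G) {H : Set X} (hH : IsHalfspace G H)
    {x y x' y' : X} (hx : x ∈ H) (hy : y ∈ H) (hx' : x' ∉ H) (hy' : y' ∉ H)
    (hax : G.Adj x x') (hay : G.Adj y y') {z : X} (hz : z ∈ interval G x y) :
    z ∈ H ∧ ∃ z', G.Adj z z' ∧ z' ∉ H := by
  have hc := hG.1
  have hzH : z ∈ H := hH.1 x hx y hy hz
  have hHW : H = WS G x x' := halfspace_eq_ws hG hH hx hx' hax
  have hHW' : H = WS G y y' := halfspace_eq_ws hG hH hy hy' hay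
  have hzx : G.dist x' z = G.dist x z + 1 := ws_dist hG hax (hHW ▸ hzH)
  have hzy : G.dist y' z = G.dist y z + 1 := ws_dist hG hay (hHW' ▸ hzH)
  have hxy' : G.dist y' x = G.dist y x + 1 := ws_dist hG hay (hHW' ▸ hx)
  have hx'W : x' ∉ WS G y y' := fun hcon => hx' (by rw [hHW']; exact hcon)
  have hx'y' : G.dist y x' = G.dist y' x' + 1 := ws_dist' hG hay hx'W
  obtain ⟨m, g1, g2, g3⟩ := (hG.2 z x' y').exists
  have e1 := mem_intv g1
  have e2 := mem_intv g2
  have e3 := mem_intv g3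
  have ez := mem_intv hz
  have c1 : G.dist z x' = G.dist x' z := SimpleGraph.dist_comm
  have c2 : G.dist y' z = G.dist z y' := SimpleGraph.dist_comm
  have c3 : G.dist y' m = G.dist m y' := SimpleGraph.dist_comm
  have c4 : G.dist z y = G.dist y z := SimpleGraph.dist_comm
  have c5 : G.dist y x' = G.dist x' y := SimpleGraph.dist_comm
  have c6 : G.dist y x = G.dist x y := SimpleGraph.dist_comm
  have c7 : G.dist y' x = G.dist x y' := SimpleGraph.dist_comm
  have c8 : G.dist y' x' = G.dist x' y' := SimpleGraph.dist_comm
  have hyx : G.dist x' y = G.dist x y + 1 := ws_dist hG hax (hHW ▸ hy)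
  have c9 : G.dist m z = G.dist z m := SimpleGraph.dist_comm
  have c10 : G.dist x' m = G.dist m x' := SimpleGraph.dist_comm
  have tx'y' : G.dist x' y' ≤ G.dist x' z + G.dist z y' := hc.dist_triangle
  have tx'y'2 : G.dist x y' ≤ G.dist x x' + G.dist x' y' := hc.dist_triangle
  have hdxx' : G.dist x x' = 1 := SimpleGraph.dist_eq_one_iff_adj.mpr hax
  have hzm : G.dist z m = 1 := by omega
  have hmH : m ∉ H := by
    have : m ∈ Hᶜ := hH.2 x' hx' y' hy' g2
    exact this
  exact ⟨hzH, m, SimpleGraph.dist_eq_one_iff_adj.mp hzm, hmH⟩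

lemma crossing_aux (hG : IsMedianGraph G) {S : Set X} :
    ∀ {p q : X} (w : G.Walk p q), w.length = G.dist p q → p ∈ S → q ∉ S →
    ∃ u v, G.Adj u v ∧ u ∈ S ∧ v ∉ S ∧ u ∈ interval G p q ∧ v ∈ interval G p q := by
  intro p q w
  induction w with
  | nil => intro _ hp hq; exact absurd hp hq
  | @cons p r q hpr w ih =>
    intro hlen hp hq
    have hc := hG.1
    have hdpr : G.dist p r = 1 := SimpleGraph.dist_eq_one_iff_adj.mpr hpr
    have hwl : G.dist r q ≤ w.length := SimpleGraph.dist_le w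
    have htri : G.dist p q ≤ G.dist p r + G.dist r q := hc.dist_triangle
    have hlen' : w.length + 1 = G.dist p q := by
      rw [← hlen]; simp [SimpleGraph.Walk.length_cons]
    have hrq : G.dist r q = w.length := by omega
    have hrI : r ∈ interval G p q := intv_of (by omega)
    by_cases hr : r ∈ S
    · obtain ⟨u, v, h1, h2, h3, h4, h5⟩ := ih hrq.symm hr hq
      have e4 := mem_intv h4
      have e5 := mem_intv h5
      have t1 : G.dist p u ≤ G.dist p r + G.dist r u := hc.dist_triangle
      have t2 : G.dist p q ≤ G.dist p u + G.dist u q := hc.dist_triangle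
      have t3 : G.dist p v ≤ G.dist p r + G.dist r v := hc.dist_triangle
      have t4 : G.dist p q ≤ G.dist p v + G.dist v q := hc.dist_triangle
      exact ⟨u, v, h1, h2, h3, intv_of (by omega), intv_of (by omega)⟩
    · refine ⟨p, r, hpr, hp, hr, intv_of ?_, hrI⟩
      rw [SimpleGraph.dist_self]
      omega

lemma crossing (hG : IsMedianGraph G) {S : Set X} {p q : X} (hp : p ∈ S) (hq : q ∉ S) :
    ∃ u v, G.Adj u v ∧ u ∈ S ∧ v ∉ S ∧ u ∈ interval G p q ∧ v ∈ interval G p q := by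
  obtain ⟨w, hw⟩ := hG.1.exists_walk_length_eq_dist p q
  exact crossing_aux hG w hw hp hq

end MedAux


theorem finite_hyperplanes_iff_finitely_nonnested (G : SimpleGraph X) (hG : IsMedianGraph G) :
    (∀ H : Set X, IsHalfspace G H → H ≠ ∅ → H ≠ Set.univ →
        (edgeBoundaryIn G H).Finite) ↔
    (∀ H : Set X, IsHalfspace G H →
        {K : Set X | IsHalfspace G K ∧ NonNested H K}.Finite) := by
  classical
  constructor
  · intro hfin H hH
    rcases Set.eq_empty_or_nonempty {K : Set X | IsHalfspace G K ∧ NonNested H K} with hS | hS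
    · rw [hS]; exact Set.finite_empty
    obtain ⟨K₀, hK₀h, hK₀nn⟩ := hS
    have hHne : H ≠ ∅ := by
      obtain ⟨p, hp⟩ := hK₀nn.1
      intro h; rw [h] at hp; exact hp.1
    have hHnu : H ≠ Set.univ := by
      obtain ⟨p, hp⟩ := hK₀nn.2.2.1
      intro h; rw [h] at hp; exact hp.1 trivial
    have hEfin := hfin H hH hHne hHnu
    have hVfin : (Prod.snd '' edgeBoundaryIn G H).Finite := hEfin.image _
    apply Set.Finite.subset ((hVfin.prod hVfin).image (fun e : X × X => MedAux.WS G e.1 e.2))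
    rintro K ⟨hKh, hNN⟩
    obtain ⟨pa, hpa⟩ := hNN.1
    obtain ⟨pb, hpb⟩ := hNN.2.1
    obtain ⟨pc, hpc⟩ := hNN.2.2.1
    obtain ⟨pd, hpd⟩ := hNN.2.2.2
    obtain ⟨x, x', hadj1, hxH, hx'H, hxI, hx'I⟩ := MedAux.crossing hG (S := H) hpa.1 hpc.1
    have hxK : x ∈ K := hKh.1 pa hpa.2 pc hpc.2 hxI
    obtain ⟨y, y', hadj2, hyH, hy'H, hyI, hy'I⟩ := MedAux.crossing hG (S := H) hpb.1 hpd.1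
    have hyK : y ∉ K := hKh.2 pb hpb.2 pd hpd.2 hyI
    obtain ⟨u, v, hadj3, huK, hvK, huI, hvI⟩ := MedAux.crossing hG (S := K) hxK hyK
    obtain ⟨huH, u₀, hu₀a, hu₀H⟩ :=
      MedAux.boundary_convex hG hH hxH hyH hx'H hy'H hadj1 hadj2 huI
    obtain ⟨hvH, v₀, hv₀a, hv₀H⟩ :=
      MedAux.boundary_convex hG hH hxH hyH hx'H hy'H hadj1 hadj2 hvI
    refine ⟨(u, v), ⟨⟨(u₀, u), ⟨hu₀a.symm, hu₀H, huH⟩, rfl⟩,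
      ⟨(v₀, v), ⟨hv₀a.symm, hv₀H, hvH⟩, rfl⟩⟩, ?_⟩
    exact (MedAux.halfspace_eq_ws hG hKh huK hvK hadj3).symm
  · intro hnn H hH _ _
    have hSfin : {K : Set X | IsHalfspace G K ∧ NonNested H K}.Finite := hnn H hH
    have hUfin : ({w : X | w ∈ H ∧ ∃ w', G.Adj w w' ∧ w' ∉ H}).Finite := by
      have hPfin : {T : Set (Set X) | T ⊆ {K : Set X | IsHalfspace G K ∧ NonNested H K}}.Finite :=
        hSfin.finite_subsets
      have himg : ((fun w => {K : Set X | (IsHalfspace G K ∧ NonNested H K) ∧ w ∈ K}) ''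
          {w : X | w ∈ H ∧ ∃ w', G.Adj w w' ∧ w' ∉ H}).Finite := by
        apply hPfin.subset
        rintro T ⟨w, _, rfl⟩
        intro K hK
        exact hK.1
      apply Set.Finite.of_finite_image himg
      rintro b hb b' hb' heq
      by_contra hne
      obtain ⟨hbH, ab, habj, habH⟩ := hb
      obtain ⟨hb'H, ab', hab'j, hab'H⟩ := hb'
      obtain ⟨u, c, hadj, huS, hcS, huI, hcI⟩ := MedAux.crossing hG (S := ({b} : Set X)) rfl
        (fun h => hne (Set.mem_singleton_iff.mp h).symm)
      have hub : u = b := huS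
      rw [hub] at hadj
      obtain ⟨hcH, a', ha'j, ha'H⟩ :=
        MedAux.boundary_convex hG hH hbH hb'H habH hab'H habj hab'j hcI
      have hcb : G.dist b c = 1 := SimpleGraph.dist_eq_one_iff_adj.mpr hadj
      have hcbc : G.dist c b = 1 := by rw [SimpleGraph.dist_comm]; exact hcb
      have hKhalf : IsHalfspace G (MedAux.WS G c b) := MedAux.ws_halfspace hG hadj.symm
      have hbK : b ∉ MedAux.WS G c b := by
        intro h
        have h' : G.dist c b < G.dist b b := h
        rw [SimpleGraph.dist_self] at h'
        omega
      have hbb' : G.dist b b' ≠ 0 := fun h0 => hne (hG.1.dist_eq_zero_iff.mp h0)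
      have hcIe := MedAux.mem_intv hcI
      have hb'K : b' ∈ MedAux.WS G c b := by
        show G.dist c b' < G.dist b b'
        omega
      have hcK : c ∈ MedAux.WS G c b := by
        show G.dist c c < G.dist b c
        rw [SimpleGraph.dist_self]
        omega
      have ha'K : a' ∈ MedAux.WS G c b := by
        show G.dist c a' < G.dist b a'
        have h1 : G.dist c a' = 1 := SimpleGraph.dist_eq_one_iff_adj.mpr ha'j
        have h0 : G.dist b a' ≠ 0 := fun hz => ha'H (hG.1.dist_eq_zero_iff.mp hz ▸ hbH)
        have h2 : G.dist b a' ≠ 1 := by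
          intro hz
          have hba' : G.Adj b a' := SimpleGraph.dist_eq_one_iff_adj.mp hz
          exact MedAux.triangle_free hG hadj ha'j hba'
        omega
      have habK : ab ∉ MedAux.WS G c b := by
        intro h
        have h' : G.dist c ab < G.dist b ab := h
        have h1 : G.dist b ab = 1 := SimpleGraph.dist_eq_one_iff_adj.mpr habj
        have h0 : G.dist c ab ≠ 0 := fun hz => habH (hG.1.dist_eq_zero_iff.mp hz ▸ hcH)
        omega
      have hNN : NonNested H (MedAux.WS G c b) :=
        ⟨⟨c, hcH, hcK⟩, ⟨b, hbH, hbK⟩, ⟨a', ha'H, ha'K⟩, ⟨ab, habH, habK⟩⟩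
      have hmem : MedAux.WS G c b ∈
          (fun w => {K : Set X | (IsHalfspace G K ∧ NonNested H K) ∧ w ∈ K}) b' :=
        ⟨⟨hKhalf, hNN⟩, hb'K⟩
      rw [← heq] at hmem
      exact hbK hmem.2
    have himg2 : (Prod.snd '' edgeBoundaryIn G H).Finite := by
      apply hUfin.subset
      rintro _ ⟨⟨e1, e2⟩, ⟨hadj, h1, h2⟩, rfl⟩
      exact ⟨h2, e1, hadj.symm, h1⟩
    apply Set.Finite.of_finite_image himg2
    rintro ⟨e1, e2⟩ he ⟨f1, f2⟩ hf hef
    have he1 : G.Adj e1 e2 := he.1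
    have he2 : e1 ∉ H := he.2.1
    have he3 : e2 ∈ H := he.2.2
    have hf1 : G.Adj f1 f2 := hf.1
    have hf2 : f1 ∉ H := hf.2.1
    have hf3 : f2 ∈ H := hf.2.2
    have hef2 : e2 = f2 := hef
    subst hef2
    clear he hf hef
    have hHW : H = MedAux.WS G e2 e1 := MedAux.halfspace_eq_ws hG hH he3 he2 he1.symm
    have hf2' : ¬ G.dist e2 f1 < G.dist e1 f1 := fun hcon => hf2 (by rw [hHW]; exact hcon)
    rw [not_lt] at hf2'
    have hdf : G.dist e2 f1 = 1 := SimpleGraph.dist_eq_one_iff_adj.mpr hf1.symm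
    rcases MedAux.dichotomy hG he1.symm f1 with h | h
    · exfalso; omega
    · have he1f1 : e1 = f1 := hG.1.dist_eq_zero_iff.mp (by omega)
      rw [he1f1]
end

section
/- For a set X and a subpocset H ⊆ 2^X (a family closed under complements, containing ∅ and X), the following are equivalent: (i) H is closed in the product (Cantor) topology on 2^X and every element of H other than ∅ and X is isolated in H; (ii) for every x, y ∈ X, there are only finitely many sets in H containing x but not y. -/
open SimpleGraph

variable {X : Type*}

private lemma eval_open {Y : Type*} (a : Y) (b : Bool) :
    IsOpen {h : Y → Bool | h a = b} := by
  show IsOpen ((fun h : Y → Bool => h a) ⁻¹' {b})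
  exact (isOpen_discrete _).preimage (continuous_apply a)

private lemma eval_closed {Y : Type*} (a : Y) (b : Bool) :
    IsClosed {h : Y → Bool | h a = b} := by
  rw [← isOpen_compl_iff]
  have h1 : {h : Y → Bool | h a = b}ᶜ = {h | h a = !b} := by
    ext h; cases hb : h a <;> cases b <;> simp [hb]
  rw [h1]; exact eval_open a !b

private lemma aux_sep {Y : Type*} (f : Y → Bool) (x y : Y) (hx : f x = true)
    (hy : f y = false) (T : Set (Y → Bool)) (hT : T.Finite) (hfT : f ∉ T) :
    ∃ U : Set (Y → Bool), IsOpen U ∧ f ∈ U ∧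
      ∀ h ∈ U, h x = true ∧ h y = false ∧ h ∉ T := by
  haveI := hT.to_subtype
  have hz : ∀ g : T, ∃ a, (g : Y → Bool) a ≠ f a := fun g =>
    Function.ne_iff.mp (fun he => hfT (he ▸ g.2))
  refine ⟨{h | h x = true} ∩ ({h | h y = false} ∩
      ⋂ g : T, {h | h ((hz g).choose) = f ((hz g).choose)}), ?_, ?_, ?_⟩
  · exact (eval_open x true).inter ((eval_open y false).inter
      (isOpen_iInter_of_finite fun g => eval_open _ _))
  · exact ⟨hx, hy, Set.mem_iInter.mpr fun g => rfl⟩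
  · rintro h ⟨h1, h2, h3⟩
    refine ⟨h1, h2, fun hhT => ?_⟩
    have := Set.mem_iInter.mp h3 ⟨h, hhT⟩
    exact (hz ⟨h, hhT⟩).choose_spec this

private lemma ne_bot_exists {Y : Type*} {f : Y → Bool}
    (h : f ≠ (fun _ => false)) : ∃ x, f x = true := by
  obtain ⟨a, ha⟩ := Function.ne_iff.mp h
  exact ⟨a, by simpa using ha⟩

private lemma ne_top_exists {Y : Type*} {f : Y → Bool}
    (h : f ≠ (fun _ => true)) : ∃ y, f y = false := by
  obtain ⟨a, ha⟩ := Function.ne_iff.mp h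
  exact ⟨a, by simpa using ha⟩

theorem subpocset_closed_isolated_iff_finitely_separating (X : Type*)
    (𝓗 : Set (X → Bool))
    (hcompl : ∀ f ∈ 𝓗, (fun x => !(f x)) ∈ 𝓗)
    (hbot : (fun _ => false) ∈ 𝓗) (htop : (fun _ => true) ∈ 𝓗) :
    (IsClosed 𝓗 ∧
      ∀ f ∈ 𝓗, f ≠ (fun _ => false) → f ≠ (fun _ => true) →
        ∃ U : Set (X → Bool), IsOpen U ∧ U ∩ 𝓗 = {f}) ↔
    (∀ x y : X, {f : X → Bool | f ∈ 𝓗 ∧ f x = true ∧ f y = false}.Finite) := by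
  constructor
  · rintro ⟨hclosed, hiso⟩ x y
    set S : Set (X → Bool) := {f | f ∈ 𝓗 ∧ f x = true ∧ f y = false} with hSdef
    have hSclosed : IsClosed S := by
      have hEq : S = 𝓗 ∩ ({h | h x = true} ∩ {h | h y = false}) := by
        rfl
      rw [hEq]
      exact hclosed.inter ((eval_closed x true).inter (eval_closed y false))
    have hScompact : IsCompact S := hSclosed.isCompact
    have key : ∀ g : S, ∃ U : Set (X → Bool), IsOpen U ∧ U ∩ 𝓗 = {(g : X → Bool)} := by
      rintro ⟨g, hg𝓗, hgx, hgy⟩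
      refine hiso g hg𝓗 ?_ ?_
      · intro h; rw [h] at hgx; simp at hgx
      · intro h; rw [h] at hgy; simp at hgy
    choose U hUo hUe using key
    have hcover : S ⊆ ⋃ g : S, U g := by
      intro h hh
      have hm : h ∈ U ⟨h, hh⟩ ∩ 𝓗 := by rw [hUe ⟨h, hh⟩]; exact rfl
      exact Set.mem_iUnion.mpr ⟨⟨h, hh⟩, hm.1⟩
    obtain ⟨t, ht⟩ := hScompact.elim_finite_subcover U hUo hcover
    apply Set.Finite.subset (t.finite_toSet.image (fun g : S => (g : X → Bool)))
    intro h hh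
    obtain ⟨g, hgt, hgU⟩ : ∃ g ∈ t, h ∈ U g := by simpa using ht hh
    have hm : h ∈ U g ∩ 𝓗 := ⟨hgU, hh.1⟩
    rw [hUe g] at hm
    exact ⟨g, hgt, hm.symm⟩
  · intro hfin
    constructor
    · rw [← isOpen_compl_iff, isOpen_iff_forall_mem_open]
      intro f hf
      have hnb : f ≠ (fun _ => false) := fun h => hf (h ▸ hbot)
      have hnt : f ≠ (fun _ => true) := fun h => hf (h ▸ htop)
      obtain ⟨x, hx⟩ := ne_bot_exists hnb
      obtain ⟨y, hy⟩ := ne_top_exists hnt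
      obtain ⟨U, hUo, hfU, hU⟩ := aux_sep f x y hx hy _ (hfin x y)
        (fun hmem => hf hmem.1)
      refine ⟨U, fun h hh hh𝓗 => ?_, hUo, hfU⟩
      exact (hU h hh).2.2 ⟨hh𝓗, (hU h hh).1, (hU h hh).2.1⟩
    · intro f hf hnb hnt
      obtain ⟨x, hx⟩ := ne_bot_exists hnb
      obtain ⟨y, hy⟩ := ne_top_exists hnt
      obtain ⟨U, hUo, hfU, hU⟩ := aux_sep f x y hx hy
        ({g | g ∈ 𝓗 ∧ g x = true ∧ g y = false} \ {f})
        ((hfin x y).subset Set.diff_subset) (fun hmem => hmem.2 rfl)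
      refine ⟨U, hUo, ?_⟩
      ext h
      constructor
      · rintro ⟨hhU, hh𝓗⟩
        obtain ⟨h1, h2, h3⟩ := hU h hhU
        by_contra hne
        exact h3 ⟨⟨hh𝓗, h1, h2⟩, hne⟩
      · rintro rfl
        exact ⟨hfU, hf⟩
end

section
/- Let P be a profinite pocset (a compact topological pocset satisfying the Priestley separation axiom with complementation continuous). Then every closed partial orientation F ⊆ P extends to a clopen orientation U ⊇ F. -/
open SimpleGraph

variable {X : Type*}

section PocAux
set_option linter.unusedSectionVars false
set_option linter.unusedVariables false

variable {P : Type*} [PartialOrder P] [OrderBot P] [TopologicalSpace P] [CompactSpace P]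

/-- The preorder induced by a family of sets. -/
def PocRel (L : Set (Set P)) (x y : P) : Prop := ∀ W ∈ L, x ∈ W → y ∈ W

lemma pocRel_refl (L : Set (Set P)) (x : P) : PocRel L x x := fun _ _ h => h

lemma pocRel_trans {L : Set (Set P)} {x y z : P} (h1 : PocRel L x y) (h2 : PocRel L y z) :
    PocRel L x z := fun W hW hx => h2 W hW (h1 W hW hx)

lemma pocRel_mono {L L' : Set (Set P)} (h : L ⊆ L') {x y : P} (hr : PocRel L' x y) :
    PocRel L x y := fun W hW => hr W (h hW)

/-- A good family: finite, all members clopen upper sets, closed under the star operation. -/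
def GoodL (neg : P → P) (L : Set (Set P)) : Prop :=
  L.Finite ∧ ∀ W ∈ L, IsClopen W ∧ IsUpperSet W ∧ (neg ⁻¹' W)ᶜ ∈ L

lemma goodL_union {neg : P → P} {L₁ L₂ : Set (Set P)} (h1 : GoodL neg L₁) (h2 : GoodL neg L₂) :
    GoodL neg (L₁ ∪ L₂) := by
  refine ⟨h1.1.union h2.1, ?_⟩
  rintro W (hW | hW)
  · obtain ⟨a, b, c⟩ := h1.2 W hW; exact ⟨a, b, Or.inl c⟩
  · obtain ⟨a, b, c⟩ := h2.2 W hW; exact ⟨a, b, Or.inr c⟩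

lemma pocRel_neg {neg : P → P} (hinv : ∀ p, neg (neg p) = p) {L : Set (Set P)}
    (hL : GoodL neg L) {x y : P} (h : PocRel L x y) : PocRel L (neg y) (neg x) := by
  intro W hW hy
  by_contra hnx
  have hstar := (hL.2 W hW).2.2
  have hx : x ∈ (neg ⁻¹' W)ᶜ := hnx
  exact h _ hstar hx hy

lemma pocRel_of_le {L : Set (Set P)} (hL : ∀ W ∈ L, IsUpperSet W) {x y : P} (hxy : x ≤ y) :
    PocRel L x y := fun W hW hx => hL W hW hxy hx

lemma star_upper {neg : P → P} (hanti : ∀ p q : P, p ≤ q → neg q ≤ neg p) {W : Set P}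
    (hW : IsUpperSet W) : IsUpperSet ((neg ⁻¹' W)ᶜ) := by
  intro a b hab ha hb
  exact ha (hW (hanti a b hab) hb)

lemma pocStarStar {neg : P → P} (hinv : ∀ p, neg (neg p) = p) (W : Set P) :
    (neg ⁻¹' ((neg ⁻¹' W)ᶜ))ᶜ = W := by
  ext x
  simp [hinv x]

lemma isClosed_implies {Y : Type*} [TopologicalSpace Y] {W : Set P} (hW : IsClopen W)
    {f g : Y → P} (hf : Continuous f) (hg : Continuous g) :
    IsClosed {y | f y ∈ W → g y ∈ W} := by
  have : {y | f y ∈ W → g y ∈ W} = (f ⁻¹' W)ᶜ ∪ g ⁻¹' W := by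
    ext y; by_cases h : f y ∈ W <;> simp [h]
  rw [this]
  exact IsClosed.union (isClosed_compl_iff.mpr (hW.2.preimage hf)) (hW.1.preimage hg)

lemma le_of_forall_clopen
    (hpriestley : ∀ p q : P, ¬ p ≤ q →
        ∃ U : Set P, IsClopen U ∧ IsUpperSet U ∧ p ∈ U ∧ q ∉ U)
    {x y : P} (h : ∀ W : Set P, IsClopen W → IsUpperSet W → x ∈ W → y ∈ W) : x ≤ y := by
  by_contra hxy
  obtain ⟨W, h1, h2, h3, h4⟩ := hpriestley x y hxy
  exact h4 (h W h1 h2 h3)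


lemma exists_good_alpha (neg : P → P)
    (hinv : ∀ p, neg (neg p) = p)
    (hanti : ∀ p q : P, p ≤ q → neg q ≤ neg p)
    (hne : neg ⊥ ≠ ⊥)
    (hlb : ∀ p q : P, q ≤ p → q ≤ neg p → q = ⊥)
    (hcont : Continuous neg)
    (hpriestley : ∀ p q : P, ¬ p ≤ q →
        ∃ U : Set P, IsClopen U ∧ IsUpperSet U ∧ p ∈ U ∧ q ∉ U) :
    ∃ L, GoodL neg L ∧ ¬ ∃ x q r : P, PocRel L x q ∧ PocRel L x (neg q) ∧
      PocRel L (neg x) r ∧ PocRel L (neg x) (neg r) := by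
  by_contra hcon
  push_neg at hcon
  have h : ∀ L, GoodL neg L → ∃ x q r : P, PocRel L x q ∧ PocRel L x (neg q) ∧
      PocRel L (neg x) r ∧ PocRel L (neg x) (neg r) := by
    intro L hL
    exact hcon L hL
  set ι := {W : Set P // IsClopen W ∧ IsUpperSet W} with hι
  set C : ι → Set (P × P × P) := fun u =>
    {z | (z.1 ∈ u.1 → z.2.1 ∈ u.1) ∧ (z.1 ∈ u.1 → neg z.2.1 ∈ u.1) ∧
      (neg z.1 ∈ u.1 → z.2.2 ∈ u.1) ∧ (neg z.1 ∈ u.1 → neg z.2.2 ∈ u.1)} with hC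
  have hCc : ∀ u, IsClosed (C u) := by
    intro u
    have c1 : Continuous fun z : P × P × P => z.1 := continuous_fst
    have c2 : Continuous fun z : P × P × P => z.2.1 := continuous_fst.comp continuous_snd
    have c3 : Continuous fun z : P × P × P => z.2.2 := continuous_snd.comp continuous_snd
    exact ((isClosed_implies u.2.1 c1 c2).inter ((isClosed_implies u.2.1 c1 (hcont.comp c2)).inter
      ((isClosed_implies u.2.1 (hcont.comp c1) c3).inter
        (isClosed_implies u.2.1 (hcont.comp c1) (hcont.comp c3)))))
  have hempty : (Set.univ : Set (P × P × P)) ∩ ⋂ u : ι, C u = ∅ := by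
    rw [Set.univ_inter, Set.eq_empty_iff_forall_notMem]
    rintro ⟨x, q, r⟩ hz
    simp only [Set.mem_iInter] at hz
    have h1 : x ≤ q := le_of_forall_clopen hpriestley
      (fun W hc hu hx => (hz ⟨W, hc, hu⟩).1 hx)
    have h2 : x ≤ neg q := le_of_forall_clopen hpriestley
      (fun W hc hu hx => (hz ⟨W, hc, hu⟩).2.1 hx)
    have h3 : neg x ≤ r := le_of_forall_clopen hpriestley
      (fun W hc hu hx => (hz ⟨W, hc, hu⟩).2.2.1 hx)
    have h4 : neg x ≤ neg r := le_of_forall_clopen hpriestley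
      (fun W hc hu hx => (hz ⟨W, hc, hu⟩).2.2.2 hx)
    have hx0 : x = ⊥ := hlb q x h1 h2
    have hnx0 : neg x = ⊥ := hlb r (neg x) h3 h4
    rw [hx0] at hnx0
    exact hne hnx0
  obtain ⟨t, ht⟩ := isCompact_univ.elim_finite_subfamily_closed C hCc hempty
  set L : Set (Set P) :=
    (Subtype.val '' (t : Set ι)) ∪ ((fun u : ι => (neg ⁻¹' u.1)ᶜ) '' (t : Set ι)) with hLdef
  have hGood : GoodL neg L := by
    constructor
    · exact (t.finite_toSet.image _).union (t.finite_toSet.image _)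
    · rintro W (⟨u, hu, rfl⟩ | ⟨u, hu, rfl⟩)
      · exact ⟨u.2.1, u.2.2, Or.inr ⟨u, hu, rfl⟩⟩
      · refine ⟨⟨(u.2.1.2.preimage hcont).isClosed_compl,
          (u.2.1.1.preimage hcont).isOpen_compl⟩, star_upper hanti u.2.2, ?_⟩
        rw [pocStarStar hinv]
        exact Or.inl ⟨u, hu, rfl⟩
  obtain ⟨x, q, r, h1, h2, h3, h4⟩ := h L hGood
  have hmem : (x, q, r) ∈ (Set.univ : Set (P × P × P)) ∩ ⋂ u ∈ t, C u := by
    refine ⟨trivial, ?_⟩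
    simp only [Set.mem_iInter]
    intro u hu
    have huL : u.1 ∈ L := Or.inl ⟨u, hu, rfl⟩
    exact ⟨fun hm => h1 u.1 huL hm, fun hm => h2 u.1 huL hm,
      fun hm => h3 u.1 huL hm, fun hm => h4 u.1 huL hm⟩
  rw [ht] at hmem
  exact hmem

lemma exists_good_beta (neg : P → P)
    (hinv : ∀ p, neg (neg p) = p)
    (hanti : ∀ p q : P, p ≤ q → neg q ≤ neg p)
    (hcont : Continuous neg)
    (hpriestley : ∀ p q : P, ¬ p ≤ q →
        ∃ U : Set P, IsClopen U ∧ IsUpperSet U ∧ p ∈ U ∧ q ∉ U)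
    (F : Set P) (hFclosed : IsClosed F) (hFup : IsUpperSet F)
    (hFpart : ∀ p ∈ F, neg p ∉ F) :
    ∃ L, GoodL neg L ∧ ¬ ∃ f g : P, f ∈ F ∧ g ∈ F ∧ PocRel L g (neg f) := by
  by_contra hcon
  push_neg at hcon
  have h : ∀ L, GoodL neg L → ∃ f g : P, f ∈ F ∧ g ∈ F ∧ PocRel L g (neg f) := by
    intro L hL
    exact hcon L hL
  set ι := {W : Set P // IsClopen W ∧ IsUpperSet W} with hι
  set C : ι → Set (P × P) := fun u => {z | z.2 ∈ u.1 → neg z.1 ∈ u.1} with hC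
  have hCc : ∀ u, IsClosed (C u) :=
    fun u => isClosed_implies u.2.1 continuous_snd (hcont.comp continuous_fst)
  have hempty : (F ×ˢ F) ∩ ⋂ u : ι, C u = ∅ := by
    rw [Set.eq_empty_iff_forall_notMem]
    rintro ⟨f, g⟩ ⟨hFm, hz⟩
    simp only [Set.mem_iInter] at hz
    have h1 : g ≤ neg f := le_of_forall_clopen hpriestley
      (fun W hc hu hx => hz ⟨W, hc, hu⟩ hx)
    exact hFpart f hFm.1 (hFup h1 hFm.2)
  obtain ⟨t, ht⟩ := ((hFclosed.isCompact).prod (hFclosed.isCompact)).elim_finite_subfamily_closed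
    C hCc hempty
  set L : Set (Set P) :=
    (Subtype.val '' (t : Set ι)) ∪ ((fun u : ι => (neg ⁻¹' u.1)ᶜ) '' (t : Set ι)) with hLdef
  have hGood : GoodL neg L := by
    constructor
    · exact (t.finite_toSet.image _).union (t.finite_toSet.image _)
    · rintro W (⟨u, hu, rfl⟩ | ⟨u, hu, rfl⟩)
      · exact ⟨u.2.1, u.2.2, Or.inr ⟨u, hu, rfl⟩⟩
      · refine ⟨⟨(u.2.1.2.preimage hcont).isClosed_compl,
          (u.2.1.1.preimage hcont).isOpen_compl⟩, star_upper hanti u.2.2, ?_⟩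
        rw [pocStarStar hinv]
        exact Or.inl ⟨u, hu, rfl⟩
  obtain ⟨f, g, hf, hg, h1⟩ := h L hGood
  have hmem : (f, g) ∈ (F ×ˢ F) ∩ ⋂ u ∈ t, C u := by
    refine ⟨⟨hf, hg⟩, ?_⟩
    simp only [Set.mem_iInter]
    intro u hu
    exact fun hm => h1 u.1 (Or.inl ⟨u, hu, rfl⟩) hm
  rw [ht] at hmem
  exact hmem

lemma exists_good_gamma (neg : P → P)
    (hinv : ∀ p, neg (neg p) = p)
    (hanti : ∀ p q : P, p ≤ q → neg q ≤ neg p)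
    (hne : neg ⊥ ≠ ⊥)
    (hlb : ∀ p q : P, q ≤ p → q ≤ neg p → q = ⊥)
    (hcont : Continuous neg)
    (hpriestley : ∀ p q : P, ¬ p ≤ q →
        ∃ U : Set P, IsClopen U ∧ IsUpperSet U ∧ p ∈ U ∧ q ∉ U)
    (F : Set P) (hFclosed : IsClosed F) (hFup : IsUpperSet F)
    (hFpart : ∀ p ∈ F, neg p ∉ F) :
    ∃ L, GoodL neg L ∧ ¬ ∃ f q : P, f ∈ F ∧ PocRel L f q ∧ PocRel L f (neg q) := by
  by_contra hcon
  push_neg at hcon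
  have h : ∀ L, GoodL neg L → ∃ f q : P, f ∈ F ∧ PocRel L f q ∧ PocRel L f (neg q) := by
    intro L hL
    exact hcon L hL
  have hbotF : ⊥ ∉ F := by
    intro hb
    exact hFpart ⊥ hb (hFup bot_le hb)
  set ι := {W : Set P // IsClopen W ∧ IsUpperSet W} with hι
  set C : ι → Set (P × P) := fun u =>
    {z | (z.1 ∈ u.1 → z.2 ∈ u.1) ∧ (z.1 ∈ u.1 → neg z.2 ∈ u.1)} with hC
  have hCc : ∀ u, IsClosed (C u) :=
    fun u => (isClosed_implies u.2.1 continuous_fst continuous_snd).inter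
      (isClosed_implies u.2.1 continuous_fst (hcont.comp continuous_snd))
  have hempty : (F ×ˢ (Set.univ : Set P)) ∩ ⋂ u : ι, C u = ∅ := by
    rw [Set.eq_empty_iff_forall_notMem]
    rintro ⟨f, q⟩ ⟨hFm, hz⟩
    simp only [Set.mem_iInter] at hz
    have h1 : f ≤ q := le_of_forall_clopen hpriestley
      (fun W hc hu hx => (hz ⟨W, hc, hu⟩).1 hx)
    have h2 : f ≤ neg q := le_of_forall_clopen hpriestley
      (fun W hc hu hx => (hz ⟨W, hc, hu⟩).2 hx)
    have : f = ⊥ := hlb q f h1 h2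
    rw [this] at hFm
    exact hbotF hFm.1
  obtain ⟨t, ht⟩ := ((hFclosed.isCompact).prod isCompact_univ).elim_finite_subfamily_closed
    C hCc hempty
  set L : Set (Set P) :=
    (Subtype.val '' (t : Set ι)) ∪ ((fun u : ι => (neg ⁻¹' u.1)ᶜ) '' (t : Set ι)) with hLdef
  have hGood : GoodL neg L := by
    constructor
    · exact (t.finite_toSet.image _).union (t.finite_toSet.image _)
    · rintro W (⟨u, hu, rfl⟩ | ⟨u, hu, rfl⟩)
      · exact ⟨u.2.1, u.2.2, Or.inr ⟨u, hu, rfl⟩⟩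
      · refine ⟨⟨(u.2.1.2.preimage hcont).isClosed_compl,
          (u.2.1.1.preimage hcont).isOpen_compl⟩, star_upper hanti u.2.2, ?_⟩
        rw [pocStarStar hinv]
        exact Or.inl ⟨u, hu, rfl⟩
  obtain ⟨f, q, hf, h1, h2⟩ := h L hGood
  have hmem : (f, q) ∈ (F ×ˢ (Set.univ : Set P)) ∩ ⋂ u ∈ t, C u := by
    refine ⟨⟨hf, trivial⟩, ?_⟩
    simp only [Set.mem_iInter]
    intro u hu
    have huL : u.1 ∈ L := Or.inl ⟨u, hu, rfl⟩
    exact ⟨fun hm => h1 u.1 huL hm, fun hm => h2 u.1 huL hm⟩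
  rw [ht] at hmem
  exact hmem

end PocAux

theorem closed_partial_orientation_extends {P : Type*} [PartialOrder P] [OrderBot P]
    [TopologicalSpace P] [CompactSpace P]
    (neg : P → P)
    (hinv : ∀ p, neg (neg p) = p)
    (hanti : ∀ p q : P, p ≤ q → neg q ≤ neg p)
    (hne : neg ⊥ ≠ ⊥)
    (hlb : ∀ p q : P, q ≤ p → q ≤ neg p → q = ⊥)
    (hcont : Continuous neg)
    (hpriestley : ∀ p q : P, ¬ p ≤ q →
        ∃ U : Set P, IsClopen U ∧ IsUpperSet U ∧ p ∈ U ∧ q ∉ U)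
    (F : Set P) (hFclosed : IsClosed F) (hFup : IsUpperSet F)
    (hFpart : ∀ p ∈ F, neg p ∉ F) :
    ∃ U : Set P, IsClopen U ∧ IsUpperSet U ∧ (∀ p : P, p ∈ U ↔ neg p ∉ U) ∧ F ⊆ U := by
  classical
  obtain ⟨L₁, hG1, hα⟩ := exists_good_alpha neg hinv hanti hne hlb hcont hpriestley
  obtain ⟨L₂, hG2, hβ⟩ := exists_good_beta neg hinv hanti hcont hpriestley F hFclosed hFup hFpart
  obtain ⟨L₃, hG3, hγ⟩ :=
    exists_good_gamma neg hinv hanti hne hlb hcont hpriestley F hFclosed hFup hFpart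
  set L := L₁ ∪ L₂ ∪ L₃ with hLdef
  have hGood : GoodL neg L := goodL_union (goodL_union hG1 hG2) hG3
  have hsub1 : L₁ ⊆ L := fun W h => Or.inl (Or.inl h)
  have hsub2 : L₂ ⊆ L := fun W h => Or.inl (Or.inr h)
  have hsub3 : L₃ ⊆ L := fun W h => Or.inr h
  have hα' : ¬ ∃ x q r : P, PocRel L x q ∧ PocRel L x (neg q) ∧
      PocRel L (neg x) r ∧ PocRel L (neg x) (neg r) := by
    rintro ⟨x, q, r, h1, h2, h3, h4⟩
    exact hα ⟨x, q, r, pocRel_mono hsub1 h1, pocRel_mono hsub1 h2,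
      pocRel_mono hsub1 h3, pocRel_mono hsub1 h4⟩
  have hβ' : ¬ ∃ f g : P, f ∈ F ∧ g ∈ F ∧ PocRel L g (neg f) := by
    rintro ⟨f, g, hf, hg, h1⟩
    exact hβ ⟨f, g, hf, hg, pocRel_mono hsub2 h1⟩
  have hγ' : ¬ ∃ f q : P, f ∈ F ∧ PocRel L f q ∧ PocRel L f (neg q) := by
    rintro ⟨f, q, hf, h1, h2⟩
    exact hγ ⟨f, q, hf, pocRel_mono hsub3 h1, pocRel_mono hsub3 h2⟩
  have hup : ∀ W ∈ L, IsUpperSet W := fun W hW => (hGood.2 W hW).2.1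
  have hRneg : ∀ {x y : P}, PocRel L x y → PocRel L (neg y) (neg x) :=
    fun h => pocRel_neg hinv hGood h
  have hRneg' : ∀ {x y : P}, PocRel L x (neg y) → PocRel L y (neg x) := by
    intro x y h
    have := hRneg h
    rwa [hinv] at this
  set O₀ : Set P := {y | ∃ f ∈ F, PocRel L f y} with hO₀def
  set S : Set (Set P) := {O | O₀ ⊆ O ∧ (∀ x ∈ O, ∀ y, PocRel L x y → y ∈ O) ∧
    (∀ x ∈ O, neg x ∉ O) ∧ (∀ x ∈ O, ¬ ∃ q, PocRel L x q ∧ PocRel L x (neg q))} with hSdef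
  have hO₀S : O₀ ∈ S := by
    refine ⟨subset_rfl, ?_, ?_, ?_⟩
    · rintro x ⟨f, hf, hfx⟩ y hxy
      exact ⟨f, hf, pocRel_trans hfx hxy⟩
    · rintro x ⟨f, hf, hfx⟩ ⟨g, hg, hgx⟩
      exact hβ' ⟨f, g, hf, hg, pocRel_trans hgx (hRneg hfx)⟩
    · rintro x ⟨f, hf, hfx⟩ ⟨q, h1, h2⟩
      exact hγ' ⟨f, q, hf, pocRel_trans hfx h1, pocRel_trans hfx h2⟩
  have hbdd : ∀ c ⊆ S, IsChain (· ⊆ ·) c → c.Nonempty → ∃ ub ∈ S, ∀ s ∈ c, s ⊆ ub := by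
    intro c hcS hchain hcne
    refine ⟨⋃₀ c, ⟨?_, ?_, ?_, ?_⟩, fun s hs => Set.subset_sUnion_of_mem hs⟩
    · obtain ⟨O1, hO1⟩ := hcne
      exact (hcS hO1).1.trans (Set.subset_sUnion_of_mem hO1)
    · rintro x ⟨O1, hO1, hx⟩ y hxy
      exact ⟨O1, hO1, (hcS hO1).2.1 x hx y hxy⟩
    · rintro x ⟨O1, hO1, hx⟩ ⟨O2, hO2, hnx⟩
      rcases hchain.total hO1 hO2 with h | h
      · exact (hcS hO2).2.2.1 x (h hx) hnx
      · exact (hcS hO1).2.2.1 x hx (h hnx)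
    · rintro x ⟨O1, hO1, hx⟩ hq
      exact (hcS hO1).2.2.2 x hx hq
  obtain ⟨O, hO₀O, hOmax⟩ := zorn_subset_nonempty S hbdd O₀ hO₀S
  have hOS : O ∈ S := hOmax.prop
  have hext : ∀ a, a ∉ O → ¬ (∃ q, PocRel L a q ∧ PocRel L a (neg q)) →
      ¬ (∃ c ∈ O, PocRel L a (neg c)) → False := by
    intro a ha hasmall hac
    have hO'S : O ∪ {y | PocRel L a y} ∈ S := by
      refine ⟨hOS.1.trans Set.subset_union_left, ?_, ?_, ?_⟩
      · rintro x (hx | hx) y hxy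
        · exact Or.inl (hOS.2.1 x hx y hxy)
        · exact Or.inr (pocRel_trans hx hxy)
      · rintro x (hx | hx) (hnx | hnx)
        · exact hOS.2.2.1 x hx hnx
        · exact hac ⟨x, hx, hnx⟩
        · refine hac ⟨neg x, hnx, ?_⟩
          rw [hinv]
          exact hx
        · exact hasmall ⟨x, hx, hnx⟩
      · rintro x (hx | hx) ⟨q, h1, h2⟩
        · exact hOS.2.2.2 x hx ⟨q, h1, h2⟩
        · exact hasmall ⟨q, pocRel_trans hx h1, pocRel_trans hx h2⟩
    have hsub : O ∪ {y | PocRel L a y} ⊆ O := hOmax.2 hO'S Set.subset_union_left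
    exact ha (hsub (Or.inr (pocRel_refl L a)))
  have hfull : ∀ p, p ∈ O ∨ neg p ∈ O := by
    intro p
    by_contra hcon2
    push_neg at hcon2
    obtain ⟨hp, hnp⟩ := hcon2
    by_cases hps : ∃ q, PocRel L p q ∧ PocRel L p (neg q)
    · obtain ⟨q, hq1, hq2⟩ := hps
      refine hext (neg p) hnp ?_ ?_
      · rintro ⟨r, hr1, hr2⟩
        exact hα' ⟨p, q, r, hq1, hq2, hr1, hr2⟩
      · rintro ⟨c, hc, hrel⟩
        have hcp : PocRel L c p := by
          have := hRneg hrel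
          rwa [hinv, hinv] at this
        exact hOS.2.2.2 c hc ⟨q, pocRel_trans hcp hq1, pocRel_trans hcp hq2⟩
    · by_cases hpc : ∃ c ∈ O, PocRel L p (neg c)
      · obtain ⟨c, hcO, hpcr⟩ := hpc
        have hcnp : PocRel L c (neg p) := hRneg' hpcr
        refine hext (neg p) hnp ?_ ?_
        · rintro ⟨q, h1, h2⟩
          exact hOS.2.2.2 c hcO ⟨q, pocRel_trans hcnp h1, pocRel_trans hcnp h2⟩
        · rintro ⟨b, hbO, hrel⟩
          have hbp : PocRel L b p := by
            have := hRneg hrel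
            rwa [hinv, hinv] at this
          have hncO : neg c ∈ O := hOS.2.1 b hbO (neg c) (pocRel_trans hbp hpcr)
          exact hOS.2.2.1 c hcO hncO
      · exact hext p hp hps hpc
  have hOclosed : IsClosed O := by
    set φ : P → Set (Set P) := fun x => {W | W ∈ L ∧ x ∈ W} with hφ
    have hfib : ∀ s ∈ φ '' O, IsClosed {x | φ x = s} := by
      rintro s ⟨x₀, hx₀, rfl⟩
      have heq : {x | φ x = φ x₀} = ⋂ W ∈ L, {x | x ∈ W ↔ x₀ ∈ W} := by
        ext x
        simp only [Set.mem_iInter, Set.mem_setOf_eq]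
        constructor
        · intro h W hW
          constructor
          · intro hx
            have hmem : W ∈ φ x := ⟨hW, hx⟩
            rw [h] at hmem
            exact hmem.2
          · intro hx
            have hmem : W ∈ φ x₀ := ⟨hW, hx⟩
            rw [← h] at hmem
            exact hmem.2
        · intro h
          ext W
          simp only [hφ, Set.mem_setOf_eq]
          constructor
          · rintro ⟨hW, hx⟩
            exact ⟨hW, (h W hW).1 hx⟩
          · rintro ⟨hW, hx⟩
            exact ⟨hW, (h W hW).2 hx⟩
      rw [heq]
      refine isClosed_biInter fun W hW => ?_
      by_cases hx₀W : x₀ ∈ W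
      · have : {x | x ∈ W ↔ x₀ ∈ W} = W := by ext x; simp [hx₀W]
        rw [this]
        exact (hGood.2 W hW).1.1
      · have : {x | x ∈ W ↔ x₀ ∈ W} = Wᶜ := by ext x; simp [hx₀W]
        rw [this]
        exact (hGood.2 W hW).1.2.isClosed_compl
    have hOeq : O = ⋃ s ∈ φ '' O, {x | φ x = s} := by
      ext x
      simp only [Set.mem_iUnion]
      constructor
      · intro hx
        exact ⟨φ x, ⟨⟨x, hx, rfl⟩, rfl⟩⟩
      · rintro ⟨s, ⟨x₀, hx₀, rfl⟩, hfx⟩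
        have hrel : PocRel L x₀ x := by
          intro W hW hx₀W
          have hmem : W ∈ φ x₀ := ⟨hW, hx₀W⟩
          rw [← hfx] at hmem
          exact hmem.2
        exact hOS.2.1 x₀ hx₀ x hrel
    have hfin : (φ '' O).Finite := by
      refine Set.Finite.subset hGood.1.finite_subsets ?_
      rintro s ⟨x, _, rfl⟩
      exact fun W hW => hW.1
    rw [hOeq]
    exact hfin.isClosed_biUnion hfib
  have hOcompl : Oᶜ = neg ⁻¹' O := by
    ext x
    simp only [Set.mem_compl_iff, Set.mem_preimage]
    constructor
    · intro hx
      exact (hfull x).resolve_left hx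
    · intro hx hxO
      exact hOS.2.2.1 x hxO hx
  have hOopen : IsOpen O := by
    rw [← isClosed_compl_iff, hOcompl]
    exact hOclosed.preimage hcont
  refine ⟨O, ⟨hOclosed, hOopen⟩, ?_, ?_, ?_⟩
  · intro a b hab ha
    exact hOS.2.1 a ha b (pocRel_of_le hup hab)
  · intro p
    constructor
    · intro h
      exact hOS.2.2.1 p h
    · intro h
      exact (hfull p).resolve_right h
  · intro f hf
    exact hOS.1 ⟨f, hf, pocRel_refl L f⟩
end

section
/- Let X be a connected locally finite graph and H a subpocset of the sets with finite edge boundary. Then H is finitely separating (any two vertices are separated by only finitely many members of H) if and only if each vertex lies on the vertex boundary of only finitely many members of H. -/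
open SimpleGraph

variable {X : Type*}

lemma walk_cross (G : SimpleGraph X) (A : Set X) {x y : X} (w : G.Walk x y)
    (hx : x ∈ A) (hy : y ∉ A) : ∃ v ∈ w.support, v ∈ vBoundary G A := by
  induction w with
  | nil => exact absurd hx hy
  | cons h p ih =>
    rename_i a b c
    by_cases hb : b ∈ A
    · obtain ⟨v, hv, hv2⟩ := ih hb hy
      exact ⟨v, by simp [hv], hv2⟩
    · exact ⟨a, by simp, ⟨b, h, Or.inl ⟨hx, hb⟩⟩⟩

theorem finitely_separating_iff_boundary_locally_finite (G : SimpleGraph X)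
    (hconn : G.Connected) (hlf : ∀ v : X, (G.neighborSet v).Finite)
    (𝓗 : Set (Set X))
    (hcompl : ∀ A ∈ 𝓗, Aᶜ ∈ 𝓗) (h0 : ∅ ∈ 𝓗) (h1 : Set.univ ∈ 𝓗)
    (hfin : ∀ A ∈ 𝓗, (crossEdges G A).Finite) :
    (∀ x y : X, {A : Set X | A ∈ 𝓗 ∧ x ∈ A ∧ y ∉ A}.Finite) ↔
    (∀ x : X, {A : Set X | A ∈ 𝓗 ∧ x ∈ vBoundary G A}.Finite) := by
  constructor
  · intro hsep x
    have hsub : {A : Set X | A ∈ 𝓗 ∧ x ∈ vBoundary G A} ⊆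
        ⋃ y ∈ G.neighborSet x,
          ({A : Set X | A ∈ 𝓗 ∧ x ∈ A ∧ y ∉ A} ∪ {A : Set X | A ∈ 𝓗 ∧ y ∈ A ∧ x ∉ A}) := by
      rintro A ⟨hA, y, hadj, h⟩
      refine Set.mem_biUnion hadj ?_
      rcases h with ⟨h1, h2⟩ | ⟨h1, h2⟩
      · exact Or.inl ⟨hA, h1, h2⟩
      · exact Or.inr ⟨hA, h2, h1⟩
    exact Set.Finite.subset ((hlf x).biUnion (fun y _ => (hsep x y).union (hsep y x))) hsub
  · intro hbd x y
    obtain ⟨w⟩ := hconn x y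
    have hsub : {A : Set X | A ∈ 𝓗 ∧ x ∈ A ∧ y ∉ A} ⊆
        ⋃ v ∈ {v | v ∈ w.support}, {A : Set X | A ∈ 𝓗 ∧ v ∈ vBoundary G A} := by
      rintro A ⟨hA, h1, h2⟩
      obtain ⟨v, hv, hv2⟩ := walk_cross G A w h1 h2
      exact Set.mem_biUnion hv ⟨hA, hv2⟩
    exact Set.Finite.subset (Set.Finite.biUnion w.support.finite_toSet
      (fun v _ => hbd v)) hsub
end
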